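/- arXiv:2406.14346 — 5 statements merged into one kernel-verified Lean document; each statement's English description precedes it below -/
import Mathlib

section
/- Let C be a category in which every ω-indexed chain stabilizes, i.e., for every functor from ℕ to C there is an index N such that all morphisms x_n → x_m for m ≥ n ≥ N are isomorphisms. Then every chain in C indexed by any well-ordered poset stabilizes; that is, C is co-well-founded. -/
open CategoryTheory Limits Opposite

universe w v u

/-- A chain indexed by a preorder stabilizes if there is an index from which on
all the morphisms of the chain are isomorphisms. -/
def ChainStabilizes {J : Type w} [Preorder J] {C : Type u} [Category.{v} C]
    (F : J ⥤ C) : Prop :=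
  ∃ i : J, ∀ j : J, ∀ h : i ≤ j, IsIso (F.map (homOfLE h))

/-- A category is co-well-founded if every chain indexed by a (nonempty) well-ordered
poset stabilizes. -/
def CoWellFounded (C : Type u) [Category.{v} C] : Prop :=
  ∀ (J : Type w) (_ : LinearOrder J) (_ : WellFoundedLT J) (_ : Nonempty J)
    (F : J ⥤ C), ChainStabilizes F

/-- An object is finitely presentable if its covariant Hom functor preserves
filtered colimits. -/
def IsFinitelyPresentableObj {C : Type u} [Category.{v} C] (X : C) : Prop :=
  ∀ (J : Type w) (_ : SmallCategory J) (_ : IsFiltered J),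
    Nonempty (PreservesColimitsOfShape J (coyoneda.obj (op X)))

/-- A category is locally finitely presentable if it is cocomplete and there is a small
family of finitely presentable objects such that every object is a filtered colimit of
objects of this family. -/
def LocallyFinitelyPresentable (C : Type u) [Category.{v} C] : Prop :=
  HasColimitsOfSize.{w, w} C ∧
  ∃ (ι : Type w) (G : ι → C),
    (∀ i, IsFinitelyPresentableObj.{w} (G i)) ∧
    ∀ X : C, ∃ (J : Type w) (_ : SmallCategory J) (_ : IsFiltered J) (D : J ⥤ C)
      (c : Cocone D), Nonempty (IsColimit c) ∧ Nonempty (c.pt ≅ X) ∧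
      ∀ j : J, ∃ i : ι, Nonempty (D.obj j ≅ G i)

/-- An atom of a topos: an object which is not initial and whose only subobjects are
the initial one and itself. -/
def IsAtomObj {C : Type u} [Category.{v} C] [HasInitial C] (X : C) : Prop :=
  (¬ Nonempty (X ≅ ⊥_ C)) ∧
  ∀ S : Subobject X, Nonempty ((S : C) ≅ ⊥_ C) ∨ S = ⊤

/-- if every ω-indexed chain in `C` stabilizes, then every chain indexed by
a (nonempty) well-ordered poset stabilizes, i.e. `C` is co-well-founded. -/
theorem stmt0 {C : Type u} [Category.{v} C]
    (h : ∀ F : ℕ ⥤ C, ∃ N : ℕ, ∀ n m : ℕ, ∀ hnm : n ≤ m, N ≤ n →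
      IsIso (F.map (homOfLE hnm))) :
    CoWellFounded.{w} C := by
  intro J _ _ hne F
  by_contra hc
  simp only [ChainStabilizes, not_exists, not_forall] at hc
  choose f hf hni using hc
  obtain ⟨i0⟩ := hne
  let g : ℕ → J := fun n => Nat.rec i0 (fun _ x => f x) n
  have hg : ∀ n, g n ≤ g (n + 1) := fun n => hf (g n)
  have hmono : Monotone g := monotone_nat_of_le_succ hg
  obtain ⟨N, hN⟩ := h (hmono.functor ⋙ F)
  have hiso := hN N (N + 1) (Nat.le_succ N) le_rfl
  apply hni (g N)
  have : F.map (homOfLE (hf (g N))) =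
      (hmono.functor ⋙ F).map (homOfLE (Nat.le_succ N)) := by
    rfl
  rw [this]
  exact hiso
end

section
/- Let C be a small category with pullbacks and with amalgamation, and let J_at be the atomic topology on C^op. Then the following are equivalent: (i) every sheaf for J_at, viewed as a functor C → Set, preserves pullbacks; (ii) condition (C2') holds: for every pullback square X∩Y → X → Z, X∩Y → Y → Z in C and every pair of morphisms u, v : Z ⇉ A whose composites with X∩Y → Z agree, there exist a morphism w : A → A' and a finite sequence k_0 = u≫w, k_1, …, k_n = v≫w of morphisms Z → A' such that any two consecutive morphisms in the sequence agree after composition with X → Z or after composition with Y → Z. (Condition (i) is equivalent to saying that C^op has pushouts and the composite of the Yoneda embedding with sheafification C^op → Sh(C^op, J_at) preserves them.) -/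
open CategoryTheory Limits Opposite

universe w v u

/-- A category has amalgamation (the left Ore condition) if every span admits a cocone. -/
def HasAmalgamation (C : Type u) [Category.{v} C] : Prop :=
  ∀ {X A B : C} (f : X ⟶ A) (g : X ⟶ B), ∃ (W : C) (h : A ⟶ W) (k : B ⟶ W), f ≫ h = g ≫ k

/-- `J` is the atomic topology: its covering sieves are exactly the nonempty sieves. -/
def IsAtomicTopology {C : Type u} [Category.{v} C] (J : GrothendieckTopology C) : Prop :=
  ∀ (X : C) (S : Sieve X), S ∈ J X ↔ ∃ (Y : C) (f : Y ⟶ X), S f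

/-- Condition (C2'): for every pullback square `X∩Y → X → Z`, `X∩Y → Y → Z` and every
pair `u, v : Z ⇉ A` agreeing on `X∩Y`, there are `w : A → A'` and a finite sequence of
morphisms `Z → A'` from `u ≫ w` to `v ≫ w` in which consecutive morphisms agree on `X`
or on `Y`. -/
def CondC2' (C : Type u) [Category.{v} C] : Prop :=
  ∀ {W X Y Z : C} (fst : W ⟶ X) (snd : W ⟶ Y) (f : X ⟶ Z) (g : Y ⟶ Z),
    IsPullback fst snd f g →
    ∀ {A : C} (u v : Z ⟶ A), (fst ≫ f) ≫ u = (fst ≫ f) ≫ v →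
      ∃ (A' : C) (w : A ⟶ A') (n : ℕ) (k : Fin (n + 1) → (Z ⟶ A')),
        k 0 = u ≫ w ∧ k (Fin.last n) = v ≫ w ∧
        ∀ i : Fin n, f ≫ k i.castSucc = f ≫ k i.succ ∨ g ≫ k i.castSucc = g ≫ k i.succ


namespace Stmt3Aux

variable {C : Type u} [SmallCategory C]

section SheafLemmas

variable (J : GrothendieckTopology Cᵒᵖ)

def princ {U V : C} (f : U ⟶ V) : Sieve (op U) where
  arrows V' e := ∃ d : V' ⟶ op V, e = d ≫ f.op
  downward_closed := by
    rintro V' V'' e ⟨d, rfl⟩ g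
    exact ⟨g ≫ d, by simp⟩

lemma princ_mem (hJ : IsAtomicTopology J) {U V : C} (f : U ⟶ V) : princ f ∈ J (op U) :=
  (hJ _ _).2 ⟨op V, f.op, ⟨𝟙 _, by simp⟩⟩

lemma fm_comp (F : Sheaf J (Type u)) {U V T : C} (a : U ⟶ V) (b : V ⟶ T)
    (x : F.val.obj (op (op U))) :
    F.val.map (a ≫ b).op.op x = F.val.map b.op.op (F.val.map a.op.op x) := by
  rw [op_comp, op_comp, FunctorToTypes.map_comp_apply]

lemma sheaf_inj (hJ : IsAtomicTopology J) (F : Sheaf J (Type u)) {U V : C} (f : U ⟶ V) :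
    Function.Injective (F.val.map f.op.op) := by
  intro x y hxy
  have hsheaf := (isSheaf_iff_isSheaf_of_type J F.val).1 F.cond _ (princ_mem J hJ f)
  let fam : Presieve.FamilyOfElements F.val (princ f).arrows :=
    fun V' e _ => F.val.map e.op x
  have hcomp : fam.Compatible := by
    intro V₁ V₂ V' g₁ g₂ e₁ e₂ h₁ h₂ hgg
    dsimp only [fam]
    rw [← FunctorToTypes.map_comp_apply, ← FunctorToTypes.map_comp_apply,
      ← op_comp, ← op_comp, hgg]
  obtain ⟨t, _, huniq⟩ := hsheaf fam hcomp
  have hx : fam.IsAmalgamation x := fun V' e he => rfl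
  have hy : fam.IsAmalgamation y := by
    rintro V' e ⟨d, rfl⟩
    dsimp only [fam]
    rw [op_comp, FunctorToTypes.map_comp_apply, FunctorToTypes.map_comp_apply, hxy]
  rw [huniq x hx, huniq y hy]

lemma sheaf_lift (hJ : IsAtomicTopology J) (F : Sheaf J (Type u)) {U V : C} (f : U ⟶ V)
    (x : F.val.obj (op (op V)))
    (hx : ∀ (T : C) (p q : V ⟶ T), f ≫ p = f ≫ q →
      F.val.map p.op.op x = F.val.map q.op.op x) :
    ∃ t, F.val.map f.op.op t = x := by
  have hsheaf := (isSheaf_iff_isSheaf_of_type J F.val).1 F.cond _ (princ_mem J hJ f)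
  have key : ∀ {V' : Cᵒᵖ} (d₁ d₂ : V' ⟶ op V), d₁ ≫ f.op = d₂ ≫ f.op →
      F.val.map d₁.op x = F.val.map d₂.op x := by
    intro V' d₁ d₂ h
    have h' : f ≫ d₁.unop = f ≫ d₂.unop := by
      have := congrArg Quiver.Hom.unop h
      simpa using this
    have := hx _ d₁.unop d₂.unop h'
    simpa using this
  let fam : Presieve.FamilyOfElements F.val (princ f).arrows :=
    fun V' e he => F.val.map (he.choose).op x
  have hcomp : fam.Compatible := by
    intro V₁ V₂ V' g₁ g₂ e₁ e₂ h₁ h₂ hgg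
    dsimp only [fam]
    rw [← FunctorToTypes.map_comp_apply, ← FunctorToTypes.map_comp_apply,
      ← op_comp, ← op_comp]
    refine key _ _ ?_
    rw [Category.assoc, Category.assoc, ← h₁.choose_spec, ← h₂.choose_spec, hgg]
  obtain ⟨t, ht, _⟩ := hsheaf fam hcomp
  refine ⟨t, ?_⟩
  have hmem : princ f f.op := ⟨𝟙 _, by simp⟩
  have := ht f.op hmem
  rw [this]
  show F.val.map (hmem.choose).op x = x
  have h2 : F.val.map (hmem.choose).op x = F.val.map (𝟙 (op V)).op x := by
    refine key _ _ ?_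
    rw [← hmem.choose_spec]; simp
  rw [h2]
  simp



lemma surj (hJ : IsAtomicTopology J) (hamalg : HasAmalgamation C) (hc2 : CondC2' C)
    (F : Sheaf J (Type u)) {W X Y Z : C} (fst : W ⟶ X) (snd : W ⟶ Y) (f : X ⟶ Z)
    (g : Y ⟶ Z) (hpb : IsPullback fst snd f g)
    (x : F.val.obj (op (op X))) (y : F.val.obj (op (op Y)))
    (hxy : F.val.map f.op.op x = F.val.map g.op.op y) :
    ∃ t, F.val.map fst.op.op t = x ∧ F.val.map snd.op.op t = y := by
  have hcrit : ∀ (T : C) (p q : X ⟶ T), fst ≫ p = fst ≫ q →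
      F.val.map p.op.op x = F.val.map q.op.op x := by
    intro T p q hpq
    obtain ⟨B₁, a, b, hab⟩ := hamalg f p
    obtain ⟨B₂, a', c, hac⟩ := hamalg f (q ≫ b)
    have huv : (fst ≫ f) ≫ a ≫ c = (fst ≫ f) ≫ a' := by
      calc (fst ≫ f) ≫ a ≫ c = fst ≫ (f ≫ a) ≫ c := by simp [Category.assoc]
        _ = fst ≫ (p ≫ b) ≫ c := by rw [hab]
        _ = (fst ≫ p) ≫ b ≫ c := by simp [Category.assoc]
        _ = (fst ≫ q) ≫ b ≫ c := by rw [hpq]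
        _ = fst ≫ (q ≫ b) ≫ c := by simp [Category.assoc]
        _ = fst ≫ f ≫ a' := by rw [← hac]
        _ = (fst ≫ f) ≫ a' := by simp [Category.assoc]
    obtain ⟨A', w, n, k, hk0, hkl, hcons⟩ := hc2 fst snd f g hpb (a ≫ c) a' huv
    have hchain : ∀ i : Fin (n+1),
        F.val.map (k i).op.op (F.val.map f.op.op x) =
        F.val.map (k 0).op.op (F.val.map f.op.op x) := by
      intro i
      induction i using Fin.induction with
      | zero => rfl
      | succ i ih =>
        rcases hcons i with h | h
        · rw [← fm_comp, ← h, fm_comp]; exact ih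
        · rw [hxy, ← fm_comp, ← h, fm_comp, ← hxy]; exact ih
    have hlast := hchain (Fin.last n)
    rw [hkl, hk0] at hlast
    apply sheaf_inj J hJ F (b ≫ c ≫ w)
    have e1 : p ≫ b ≫ c ≫ w = f ≫ (a ≫ c) ≫ w := by
      rw [← Category.assoc p b, ← hab]; simp [Category.assoc]
    have e2 : q ≫ b ≫ c ≫ w = f ≫ a' ≫ w := by
      rw [← Category.assoc q b, ← Category.assoc (q ≫ b) c, ← hac]; simp [Category.assoc]
    calc F.val.map (b ≫ c ≫ w).op.op (F.val.map p.op.op x)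
        = F.val.map (p ≫ b ≫ c ≫ w).op.op x := (fm_comp J F _ _ x).symm
      _ = F.val.map (f ≫ (a ≫ c) ≫ w).op.op x := by rw [e1]
      _ = F.val.map ((a ≫ c) ≫ w).op.op (F.val.map f.op.op x) := fm_comp J F _ _ x
      _ = F.val.map (a' ≫ w).op.op (F.val.map f.op.op x) := hlast.symm
      _ = F.val.map (f ≫ a' ≫ w).op.op x := (fm_comp J F _ _ x).symm
      _ = F.val.map (q ≫ b ≫ c ≫ w).op.op x := by rw [e2]
      _ = F.val.map (b ≫ c ≫ w).op.op (F.val.map q.op.op x) := fm_comp J F _ _ x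
  obtain ⟨t, ht⟩ := sheaf_lift J hJ F fst x hcrit
  refine ⟨t, ht, ?_⟩
  apply sheaf_inj J hJ F g
  rw [← fm_comp, ← hpb.w, fm_comp, ht, hxy]


lemma preserve (hJ : IsAtomicTopology J) (hamalg : HasAmalgamation C) (hc2 : CondC2' C)
    (F : Sheaf J (Type u)) {W X Y Z : C} (fst : W ⟶ X) (snd : W ⟶ Y) (f : X ⟶ Z)
    (g : Y ⟶ Z) (hpb : IsPullback fst snd f g) :
    IsPullback (F.val.map fst.op.op) (F.val.map snd.op.op) (F.val.map f.op.op)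
      (F.val.map g.op.op) := by
  have comm : F.val.map fst.op.op ≫ F.val.map f.op.op
      = F.val.map snd.op.op ≫ F.val.map g.op.op := by
    refine ConcreteCategory.hom_ext _ _ fun t => ?_
    simp only [types_comp_apply]
    rw [← fm_comp, ← fm_comp, hpb.w]
  refine IsPullback.of_isLimit' ⟨comm⟩ ?_
  refine PullbackCone.IsLimit.mk comm
    (fun s => TypeCat.ofHom fun pt => (surj J hJ hamalg hc2 F fst snd f g hpb (s.fst pt) (s.snd pt)
        (types_congr_hom s.condition pt)).choose) ?_ ?_ ?_
  · intro s
    refine ConcreteCategory.hom_ext _ _ fun pt => ?_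
    exact (surj J hJ hamalg hc2 F fst snd f g hpb (s.fst pt) (s.snd pt)
        (types_congr_hom s.condition pt)).choose_spec.1
  · intro s
    refine ConcreteCategory.hom_ext _ _ fun pt => ?_
    exact (surj J hJ hamalg hc2 F fst snd f g hpb (s.fst pt) (s.snd pt)
        (types_congr_hom s.condition pt)).choose_spec.2
  · intro s m h1 h2
    refine ConcreteCategory.hom_ext _ _ fun pt => ?_
    apply sheaf_inj J hJ F fst
    exact (types_congr_hom h1 pt).trans
      (surj J hJ hamalg hc2 F fst snd f g hpb (s.fst pt) (s.snd pt)
        (types_congr_hom s.condition pt)).choose_spec.1.symm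



end SheafLemmas

section Push

variable {X Y Z : C} (f : X ⟶ Z) (g : Y ⟶ Z)

/-- The relation generating the set-level pushout of `Hom(X,·) ← Hom(Z,·) → Hom(Y,·)`. -/
def pushRel (U : C) : ((X ⟶ U) ⊕ (Y ⟶ U)) → ((X ⟶ U) ⊕ (Y ⟶ U)) → Prop :=
  fun p q => ∃ s : Z ⟶ U, p = Sum.inl (f ≫ s) ∧ q = Sum.inr (g ≫ s)

/-- The set-level pushout presheaf, as a covariant functor `C ⥤ Type u`. -/
def Bfun : C ⥤ Type u where
  obj U := Quot (pushRel f g U)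
  map {U V} h := TypeCat.ofHom (show Quot (pushRel f g U) → Quot (pushRel f g V) from
    Quot.map (Sum.map (· ≫ h) (· ≫ h)) (by
    rintro p q ⟨s, rfl, rfl⟩
    exact ⟨s ≫ h, by simp⟩))
  map_id U := by
    refine ConcreteCategory.hom_ext _ _ fun x => ?_
    refine Quot.inductionOn x ?_
    rintro (a | b) <;> simp [Quot.map]
  map_comp {U V T} h₁ h₂ := by
    refine ConcreteCategory.hom_ext _ _ fun x => ?_
    refine Quot.inductionOn x ?_
    rintro (a | b) <;> simp [Quot.map]


/-- Matching of an element of the sum with a morphism out of `Z`. -/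
def Mch (U : C) : ((X ⟶ U) ⊕ (Y ⟶ U)) → (Z ⟶ U) → Prop :=
  fun p s => p = Sum.inl (f ≫ s) ∨ p = Sum.inr (g ≫ s)

/-- Zigzag connectivity. -/
def Conn (U : C) (p q : (X ⟶ U) ⊕ (Y ⟶ U)) : Prop :=
  p = q ∨ ∃ (N : ℕ) (k : ℕ → (Z ⟶ U)), Mch f g U p (k 0) ∧ Mch f g U q (k N) ∧
    ∀ i, i < N → (f ≫ k i = f ≫ k (i + 1) ∨ g ≫ k i = g ≫ k (i + 1))

lemma conn_of_eqvGen (U : C) {p q : (X ⟶ U) ⊕ (Y ⟶ U)}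
    (h : Relation.EqvGen (pushRel f g U) p q) : Conn f g U p q := by
  induction h with
  | rel p q hpq =>
    obtain ⟨s, rfl, rfl⟩ := hpq
    exact Or.inr ⟨0, fun _ => s, Or.inl rfl, Or.inr rfl, by omega⟩
  | refl p => exact Or.inl rfl
  | symm p q _ ih =>
    rcases ih with e | ⟨N, k, h0, hN, hc⟩
    · exact Or.inl e.symm
    · refine Or.inr ⟨N, fun i => k (N - i), by simpa using hN, ?_, ?_⟩
      · simpa [Nat.sub_self] using h0
      · intro i hi
        dsimp only
        have hj := hc (N - i - 1) (by omega)
        have e1 : N - i - 1 + 1 = N - i := by omega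
        have e2 : N - (i + 1) = N - i - 1 := by omega
        rw [e1] at hj
        rw [e2]
        rcases hj with h | h
        · exact Or.inl h.symm
        · exact Or.inr h.symm
  | trans p q r _ _ ih1 ih2 =>
    rcases ih1 with e | ⟨N, k, h0, hN, hc⟩
    · exact e ▸ ih2
    · rcases ih2 with e | ⟨M, k', h0', hM', hc'⟩
      · exact Or.inr ⟨N, k, h0, e ▸ hN, hc⟩
      · refine Or.inr ⟨N + 1 + M, fun i => if i ≤ N then k i else k' (i - (N + 1)),
          ?_, ?_, ?_⟩
        · dsimp only
          rw [if_pos (Nat.zero_le N)]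
          exact h0
        · dsimp only
          rw [if_neg (show ¬ N + 1 + M ≤ N by omega)]
          have e0 : N + 1 + M - (N + 1) = M := by omega
          rw [e0]
          exact hM'
        · intro i hi
          dsimp only
          rcases lt_trichotomy i N with hlt | heq | hgt
          · rw [if_pos (show i ≤ N by omega), if_pos (show i + 1 ≤ N by omega)]
            exact hc i hlt
          · subst heq
            rw [if_pos (le_refl i), if_neg (show ¬ i + 1 ≤ i by omega)]
            have hz : i + 1 - (i + 1) = 0 := by omega
            rw [hz]
            rcases hN with e1 | e1 <;> rcases h0' with e2 | e2
            · exact Or.inl (Sum.inl.inj (e1.symm.trans e2))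
            · exact absurd (e1.symm.trans e2) (by simp)
            · exact absurd (e1.symm.trans e2) (by simp)
            · exact Or.inr (Sum.inr.inj (e1.symm.trans e2))
          · rw [if_neg (show ¬ i ≤ N by omega), if_neg (show ¬ i + 1 ≤ N by omega)]
            have e3 : i + 1 - (N + 1) = i - (N + 1) + 1 := by omega
            rw [e3]
            exact hc' (i - (N + 1)) (by omega)

lemma chain_of_push (U : C) (u₁ v₁ : Z ⟶ U)
    (h : Quot.mk (pushRel f g U) (Sum.inl (f ≫ u₁)) =
      Quot.mk (pushRel f g U) (Sum.inl (f ≫ v₁))) :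
    ∃ (n : ℕ) (k : Fin (n + 1) → (Z ⟶ U)), k 0 = u₁ ∧ k (Fin.last n) = v₁ ∧
      ∀ i : Fin n, f ≫ k i.castSucc = f ≫ k i.succ ∨ g ≫ k i.castSucc = g ≫ k i.succ := by
  have hconn := conn_of_eqvGen f g U (Quot.eqvGen_exact h)
  rcases hconn with e | ⟨N, k, h0, hN, hc⟩
  · have e' : f ≫ u₁ = f ≫ v₁ := Sum.inl.inj e
    refine ⟨1, fun i => if i.val = 0 then u₁ else v₁, by simp, by simp [Fin.last], ?_⟩
    intro i
    have : i = 0 := Subsingleton.elim _ _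
    subst this
    simp only [Fin.castSucc, Fin.succ]
    exact Or.inl (by simpa using e')
  · have h0' : f ≫ u₁ = f ≫ k 0 := by
      rcases h0 with e | e
      · exact Sum.inl.inj e
      · exact absurd e (by simp)
    have hN' : f ≫ v₁ = f ≫ k N := by
      rcases hN with e | e
      · exact Sum.inl.inj e
      · exact absurd e (by simp)
    refine ⟨N + 2, fun i => if i.val = 0 then u₁ else if i.val ≤ N + 1 then k (i.val - 1)
      else v₁, by simp, ?_, ?_⟩
    · dsimp only
      have hv : ((Fin.last (N + 2)) : ℕ) = N + 2 := rfl
      rw [hv, if_neg (by omega), if_neg (by omega)]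
    · intro i
      dsimp only
      have hiN : i.val < N + 2 := i.isLt
      have hcast : (i.castSucc : ℕ) = i.val := rfl
      have hsucc : (i.succ : ℕ) = i.val + 1 := rfl
      rw [hcast, hsucc]
      rcases Nat.eq_zero_or_pos i.val with h0v | hpos
      · rw [h0v, if_pos rfl, if_neg (by omega), if_pos (by omega)]
        exact Or.inl (by simpa using h0')
      · rcases Nat.lt_or_ge i.val (N + 1) with hlt | hge
        · rw [if_neg (by omega), if_pos (by omega), if_neg (by omega), if_pos (by omega)]
          have e4 : i.val - 1 + 1 = i.val := by omega
          have e6 : i.val + 1 - 1 = i.val := by omega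
          have hstep := hc (i.val - 1) (by omega)
          rw [e4] at hstep
          rw [e6]
          exact hstep
        · have heq : i.val = N + 1 := by omega
          rw [if_neg (by omega), if_pos (by omega), if_neg (by omega), if_neg (by omega)]
          have e5 : i.val - 1 = N := by omega
          rw [e5]
          exact Or.inl hN'.symm


end Push

lemma cond_of_preserve (J : GrothendieckTopology Cᵒᵖ) (hJ : IsAtomicTopology J)
    (hpres : ∀ (F : Sheaf J (Type u)) {W X Y Z : C} (fst : W ⟶ X) (snd : W ⟶ Y) (f : X ⟶ Z)
        (g : Y ⟶ Z), IsPullback fst snd f g →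
        IsPullback (F.val.map fst.op.op) (F.val.map snd.op.op) (F.val.map f.op.op)
          (F.val.map g.op.op)) :
    CondC2' C := by
  intro W X Y Z fst snd f g hpb A u v huv
  let Q : (Cᵒᵖ)ᵒᵖ ⥤ Type u := unopUnop C ⋙ Bfun f g
  let F : Sheaf J (Type u) := ⟨J.sheafify Q, J.sheafify_isSheaf Q⟩
  let η : Q ⟶ J.sheafify Q := J.toSheafify Q
  let xX : F.val.obj (op (op X)) :=
    η.app (op (op X)) (Quot.mk (pushRel f g X) (Sum.inl (𝟙 X)))
  let yY : F.val.obj (op (op Y)) :=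
    η.app (op (op Y)) (Quot.mk (pushRel f g Y) (Sum.inr (𝟙 Y)))
  have hnatX : ∀ {T : C} (h : X ⟶ T),
      F.val.map h.op.op xX = η.app (op (op T)) (Quot.mk (pushRel f g T) (Sum.inl h)) := by
    intro T h
    have := NatTrans.naturality_apply η h.op.op
      (Quot.mk (pushRel f g X) (Sum.inl (𝟙 X)))
    refine this.symm.trans ?_
    have hq : Q.map h.op.op (Quot.mk (pushRel f g X) (Sum.inl (𝟙 X)))
        = Quot.mk (pushRel f g T) (Sum.inl h) := by
      show Quot.mk (pushRel f g T) (Sum.inl (𝟙 X ≫ h)) = _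
      rw [Category.id_comp]
    rw [hq]
  have hnatY : ∀ {T : C} (h : Y ⟶ T),
      F.val.map h.op.op yY = η.app (op (op T)) (Quot.mk (pushRel f g T) (Sum.inr h)) := by
    intro T h
    have := NatTrans.naturality_apply η h.op.op
      (Quot.mk (pushRel f g Y) (Sum.inr (𝟙 Y)))
    refine this.symm.trans ?_
    have hq : Q.map h.op.op (Quot.mk (pushRel f g Y) (Sum.inr (𝟙 Y)))
        = Quot.mk (pushRel f g T) (Sum.inr h) := by
      show Quot.mk (pushRel f g T) (Sum.inr (𝟙 Y ≫ h)) = _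
      rw [Category.id_comp]
    rw [hq]
  have hmatch : F.val.map f.op.op xX = F.val.map g.op.op yY := by
    rw [hnatX f, hnatY g]
    exact congrArg (η.app (op (op Z)))
      (Quot.sound ⟨𝟙 Z, by rw [Category.comp_id], by rw [Category.comp_id]⟩)
  have hPB := hpres F fst snd f g hpb
  let ωfun : PUnit.{u + 1} ⟶ F.val.obj (op (op W)) :=
    hPB.lift (TypeCat.ofHom fun _ => xX) (TypeCat.ofHom fun _ => yY)
      (ConcreteCategory.hom_ext _ _ fun _ => hmatch)
  let ω : F.val.obj (op (op W)) := ωfun PUnit.unit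
  have hfst : F.val.map fst.op.op ω = xX :=
    types_congr_hom (hPB.lift_fst (TypeCat.ofHom fun _ => xX) (TypeCat.ofHom fun _ => yY)
      (ConcreteCategory.hom_ext _ _ fun _ => hmatch)) PUnit.unit
  have hsnd : F.val.map snd.op.op ω = yY :=
    types_congr_hom (hPB.lift_snd (TypeCat.ofHom fun _ => xX) (TypeCat.ofHom fun _ => yY)
      (ConcreteCategory.hom_ext _ _ fun _ => hmatch)) PUnit.unit
  have fmc : ∀ {U₁ U₂ U₃ : C} (a : U₁ ⟶ U₂) (b : U₂ ⟶ U₃) (t : F.val.obj (op (op U₁))),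
      F.val.map (a ≫ b).op.op t = F.val.map b.op.op (F.val.map a.op.op t) := by
    intro U₁ U₂ U₃ a b t
    rw [op_comp, op_comp, FunctorToTypes.map_comp_apply]
  have key : η.app (op (op A)) (Quot.mk (pushRel f g A) (Sum.inl (f ≫ u)))
      = η.app (op (op A)) (Quot.mk (pushRel f g A) (Sum.inl (f ≫ v))) := by
    calc η.app (op (op A)) (Quot.mk (pushRel f g A) (Sum.inl (f ≫ u)))
        = F.val.map (f ≫ u).op.op xX := (hnatX (f ≫ u)).symm
      _ = F.val.map (f ≫ u).op.op (F.val.map fst.op.op ω) := by rw [hfst]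
      _ = F.val.map (fst ≫ f ≫ u).op.op ω := (fmc fst (f ≫ u) ω).symm
      _ = F.val.map (fst ≫ f ≫ v).op.op ω := by
          rw [← Category.assoc, huv, Category.assoc]
      _ = F.val.map (f ≫ v).op.op (F.val.map fst.op.op ω) := fmc fst (f ≫ v) ω
      _ = F.val.map (f ≫ v).op.op xX := by rw [hfst]
      _ = η.app (op (op A)) (Quot.mk (pushRel f g A) (Sum.inl (f ≫ v))) := hnatX (f ≫ v)
  haveI : Presheaf.IsLocallyInjective J η :=
    Presheaf.isLocallyInjective_toSheafify J Q
  have hsieve := Presheaf.equalizerSieve_mem J η (X := op (op A))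
    (Quot.mk (pushRel f g A) (Sum.inl (f ≫ u)))
    (Quot.mk (pushRel f g A) (Sum.inl (f ≫ v))) key
  obtain ⟨V, e, he⟩ := (hJ _ _).1 hsieve
  let w : A ⟶ unop V := e.unop
  have he' : Quot.mk (pushRel f g (unop V)) (Sum.inl ((f ≫ u) ≫ w))
      = Quot.mk (pushRel f g (unop V)) (Sum.inl ((f ≫ v) ≫ w)) := he
  have he'' : Quot.mk (pushRel f g (unop V)) (Sum.inl (f ≫ u ≫ w))
      = Quot.mk (pushRel f g (unop V)) (Sum.inl (f ≫ v ≫ w)) := by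
    rw [← Category.assoc, ← Category.assoc]
    exact he'
  obtain ⟨n, k, hk0, hkl, hcons⟩ := chain_of_push f g (unop V) (u ≫ w) (v ≫ w) he''
  exact ⟨unop V, w, n, k, hk0, hkl, hcons⟩





end Stmt3Aux

/-- for a small category `C` with pullbacks and amalgamation and the atomic
topology `J` on `Cᵒᵖ`, every sheaf (viewed as a functor `C ⥤ Type`) preserves pullbacks
if and only if (C2') holds. -/
theorem stmt3 {C : Type u} [SmallCategory C] [HasPullbacks C]
    (hamalg : HasAmalgamation C)
    (J : GrothendieckTopology Cᵒᵖ) (hJ : IsAtomicTopology J) :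
    (∀ (F : Sheaf J (Type u)) {W X Y Z : C} (fst : W ⟶ X) (snd : W ⟶ Y) (f : X ⟶ Z)
        (g : Y ⟶ Z), IsPullback fst snd f g →
        IsPullback (F.val.map fst.op.op) (F.val.map snd.op.op) (F.val.map f.op.op)
          (F.val.map g.op.op)) ↔
    CondC2' C := by
  constructor
  · intro hpres
    exact Stmt3Aux.cond_of_preserve J hJ hpres
  · intro hc2 F W X Y Z fst snd f g hpb
    exact Stmt3Aux.preserve J hJ hamalg hc2 F fst snd f g hpb
end

section
/- Let C be a small category satisfying (C1), (C2) and (C3), and let ℓ : C^op → Sh(C^op, J_at) be the composite of the Yoneda embedding with sheafification. Then for every parallel pair of morphisms α, β : n ⇉ m in C^op, there exist a morphism g : m → m' in C^op and an automorphism σ of m' such that the coequalizer of ℓ(α) and ℓ(β) in Sh(C^op, J_at) is the composite of ℓ(g) : ℓ(m) → ℓ(m') with the coequalizer map ℓ(m') → ℓ(m')∕σ, where ℓ(m')∕σ denotes the coequalizer of ℓ(σ) and the identity of ℓ(m'). -/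
open CategoryTheory Limits Opposite

universe w v u

universe v₂ u₂

/-- The composite of the Yoneda embedding `Cᵒᵖ ⥤ (Cᵒᵖᵒᵖ ⥤ Type u)` with sheafification
for a topology `J` on `Cᵒᵖ`. -/
noncomputable def atomicYoneda {C : Type u} [SmallCategory C]
    (J : GrothendieckTopology Cᵒᵖ) : Cᵒᵖ ⥤ Sheaf J (Type u) :=
  yoneda ⋙ presheafToSheaf J (Type u)

/-- Helper instance (port): the sheaf topos has an initial object; found directly since
instance search times out on it in the current Mathlib. -/
instance atomicSheafHasInitial {C : Type u} [SmallCategory C] (J : GrothendieckTopology Cᵒᵖ) :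
    HasInitial (Sheaf J (Type u)) := by
  have : HasWeakSheafify J (Type u) := inferInstance
  have : HasColimitsOfShape (Discrete PEmpty.{1}) (Type u) := inferInstance
  exact ⟨fun _ => HasColimit.mk
    ⟨Sheaf.sheafifyCocone (colimit.cocone _), Sheaf.isColimitSheafifyCocone _ (colimit.isColimit _)⟩⟩

/-- Condition (C1): the composite of Yoneda with sheafification is fully faithful and
sends every object of `Cᵒᵖ` to an atom. -/
def CondC1 {C : Type u} [SmallCategory C] (J : GrothendieckTopology Cᵒᵖ) : Prop :=
  Nonempty (atomicYoneda J).FullyFaithful ∧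
  ∀ n : Cᵒᵖ, IsAtomObj ((atomicYoneda J).obj n)

/-- Condition (C2): `Cᵒᵖ` has pushouts and the composite of Yoneda with sheafification
preserves them. -/
def CondC2 {C : Type u} [SmallCategory C] (J : GrothendieckTopology Cᵒᵖ) : Prop :=
  HasPushouts Cᵒᵖ ∧
  ∀ {W X Y Z : Cᵒᵖ} (f : W ⟶ X) (g : W ⟶ Y) (inl : X ⟶ Z) (inr : Y ⟶ Z),
    IsPushout f g inl inr →
    IsPushout ((atomicYoneda J).map f) ((atomicYoneda J).map g)
      ((atomicYoneda J).map inl) ((atomicYoneda J).map inr)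

/-- Condition (C3): `C` is well-founded, i.e. `Cᵒᵖ` is co-well-founded. -/
def CondC3 (C : Type u) [SmallCategory C] : Prop :=
  CoWellFounded.{u} Cᵒᵖ

/-- Condition (C4): the automorphism group of every object of `C` is Noetherian: every
ascending chain of subgroups stabilizes. -/
def CondC4 (C : Type u) [SmallCategory C] : Prop :=
  ∀ X : C, ∀ c : ℕ → Subgroup (Aut X), Monotone c → ∃ N, ∀ n, N ≤ n → c n = c N

/-- `π : L.obj m ⟶ Q` exhibits `Q` as the quotient of `L.obj m` by the subgroup
`G ⊆ Aut m`, i.e. as the common coequalizer of all the pairs `(L.map σ, id)`, `σ ∈ G`. -/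
def IsGroupQuotientAlong {C : Type u} [Category.{v} C] {D : Type u₂} [Category.{v₂} D]
    (L : C ⥤ D) {m : C} (G : Subgroup (Aut m)) {Q : D} (π : L.obj m ⟶ Q) : Prop :=
  (∀ σ ∈ G, L.map σ.hom ≫ π = π) ∧
  ∀ (Q' : D) (π' : L.obj m ⟶ Q'), (∀ σ ∈ G, L.map σ.hom ≫ π' = π') →
    ∃! t : Q ⟶ Q', π ≫ t = π'

namespace Stmt4Proof

variable {D : Type u} [Category.{v} D]

structure ParPair (D : Type u) [Category.{v} D] : Type (max u v) where
  src : D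
  tgt : D
  a : src ⟶ tgt
  b : src ⟶ tgt

variable [HasPushouts D]

noncomputable def ParPair.next (P : ParPair D) : ParPair D where
  src := P.tgt
  tgt := pushout P.a P.b
  a := pushout.inl P.a P.b
  b := pushout.inr P.a P.b

noncomputable def seq (P : ParPair D) : ℕ → ParPair D
  | 0 => P
  | i + 1 => (seq P i).next

attribute [reducible] seq ParPair.next

noncomputable def gmap (P : ParPair D) : ∀ i : ℕ, P.tgt ⟶ (seq P i).tgt
  | 0 => 𝟙 _
  | i + 1 => gmap P i ≫ (seq P (i + 1)).a

@[simp] lemma gmap_zero (P : ParPair D) : gmap P 0 = 𝟙 P.tgt := rfl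
@[simp] lemma gmap_succ (P : ParPair D) (i : ℕ) :
    gmap P (i + 1) = gmap P i ≫ (seq P (i+1)).a := rfl

variable {E : Type u₂} [Category.{v₂} E]

lemma fwd (L : D ⥤ E) (P : ParPair D) :
    ∀ (i : ℕ) {T : E} (t : L.obj (seq P i).tgt ⟶ T),
      L.map (seq P i).a ≫ t = L.map (seq P i).b ≫ t →
      L.map P.a ≫ (L.map (gmap P i) ≫ t) = L.map P.b ≫ (L.map (gmap P i) ≫ t)
  | 0, T, t, ht => by simpa using ht
  | (i + 1), T, t, ht => by
      have hcond : (seq P i).a ≫ (seq P (i+1)).a = (seq P i).b ≫ (seq P (i+1)).b :=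
        pushout.condition
      have key : L.map (seq P i).a ≫ (L.map (seq P (i+1)).a ≫ t)
          = L.map (seq P i).b ≫ (L.map (seq P (i+1)).a ≫ t) := by
        calc L.map (seq P i).a ≫ (L.map (seq P (i+1)).a ≫ t)
            = L.map ((seq P i).a ≫ (seq P (i+1)).a) ≫ t := by
              rw [L.map_comp, Category.assoc]
          _ = L.map ((seq P i).b ≫ (seq P (i+1)).b) ≫ t := by rw [hcond]
          _ = L.map (seq P i).b ≫ (L.map (seq P (i+1)).b ≫ t) := by
              rw [L.map_comp, Category.assoc]
          _ = L.map (seq P i).b ≫ (L.map (seq P (i+1)).a ≫ t) := by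
              rw [show L.map (seq P (i+1)).a ≫ t = L.map (seq P (i+1)).b ≫ t from ht]
      have := fwd L P i (L.map (seq P (i+1)).a ≫ t) key
      simpa [Functor.map_comp, Category.assoc] using this

lemma main (L : D ⥤ E)
    (hL : ∀ {W X Y Z : D} (f : W ⟶ X) (g : W ⟶ Y) (inl : X ⟶ Z) (inr : Y ⟶ Z),
      IsPushout f g inl inr → IsPushout (L.map f) (L.map g) (L.map inl) (L.map inr))
    (P : ParPair D) :
    ∀ (i : ℕ) {T : E} (s : L.obj P.tgt ⟶ T), L.map P.a ≫ s = L.map P.b ≫ s →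
      ∃! t : L.obj (seq P i).tgt ⟶ T,
        L.map (seq P i).a ≫ t = L.map (seq P i).b ≫ t ∧ L.map (gmap P i) ≫ t = s
  | 0, T, s, hs =>
      ⟨s, ⟨hs, by simp⟩, fun t ht => by simpa using ht.2⟩
  | (i + 1), T, s, hs => by
      obtain ⟨r, ⟨hr1, hr2⟩, hru⟩ := main L hL P i s hs
      have PO : IsPushout (L.map (seq P i).a) (L.map (seq P i).b)
          (L.map (seq P (i+1)).a) (L.map (seq P (i+1)).b) :=
        hL _ _ _ _ (IsPushout.of_hasPushout (seq P i).a (seq P i).b)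
      refine ⟨PO.desc r r hr1, ⟨?_, ?_⟩, ?_⟩
      · rw [show L.map (seq P (i+1)).a ≫ PO.desc r r hr1 = r from PO.inl_desc r r hr1,
          show L.map (seq P (i+1)).b ≫ PO.desc r r hr1 = r from PO.inr_desc r r hr1]
      · have : L.map (gmap P (i+1)) ≫ PO.desc r r hr1
            = L.map (gmap P i) ≫ (L.map (seq P (i+1)).a ≫ PO.desc r r hr1) := by
          simp [Functor.map_comp, Category.assoc]
        rw [this, show L.map (seq P (i+1)).a ≫ PO.desc r r hr1 = r from PO.inl_desc r r hr1,
          hr2]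
      · rintro t' ⟨h1, h2⟩
        have hr' : L.map (seq P (i+1)).a ≫ t' = r := by
          apply hru
          constructor
          · calc L.map (seq P i).a ≫ (L.map (seq P (i+1)).a ≫ t')
                = L.map ((seq P i).a ≫ (seq P (i+1)).a) ≫ t' := by
                  rw [L.map_comp, Category.assoc]
              _ = L.map ((seq P i).b ≫ (seq P (i+1)).b) ≫ t' := by
                  rw [show (seq P i).a ≫ (seq P (i+1)).a = (seq P i).b ≫ (seq P (i+1)).b
                    from pushout.condition]
              _ = L.map (seq P i).b ≫ (L.map (seq P (i+1)).b ≫ t') := by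
                  rw [L.map_comp, Category.assoc]
              _ = L.map (seq P i).b ≫ (L.map (seq P (i+1)).a ≫ t') := by
                  rw [show L.map (seq P (i+1)).a ≫ t' = L.map (seq P (i+1)).b ≫ t' from h1]
          · have : L.map (gmap P (i+1)) ≫ t'
                = L.map (gmap P i) ≫ (L.map (seq P (i+1)).a ≫ t') := by
              simp [Functor.map_comp, Category.assoc]
            rw [← this, h2]
        apply PO.hom_ext
        · rw [show L.map (seq P (i+1)).a ≫ PO.desc r r hr1 = r from PO.inl_desc r r hr1, hr']
        · rw [show L.map (seq P (i+1)).b ≫ PO.desc r r hr1 = r from PO.inr_desc r r hr1,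
            ← hr', show L.map (seq P (i+1)).a ≫ t' = L.map (seq P (i+1)).b ≫ t' from h1]

lemma stabilize {D : Type u} [Category.{v} D] (hD : CoWellFounded.{w} D)
    (X : ℕ → D) (f : ∀ k, X k ⟶ X (k + 1)) : ∃ N : ℕ, ∀ k, N ≤ k → IsIso (f k) := by
  haveI : WellFoundedLT (ULift.{w} ℕ) := by
    constructor
    refine Subrelation.wf (r := InvImage (· < ·) ULift.down) ?_ (InvImage.wf _ wellFounded_lt)
    intro a b h
    exact h
  have mono : Monotone (ULift.down : ULift.{w} ℕ → ℕ) := fun _ _ h => h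
  obtain ⟨i, hi⟩ := hD (ULift.{w} ℕ) inferInstance inferInstance ⟨ULift.up 0⟩
    (mono.functor ⋙ Functor.ofSequence f)
  refine ⟨i.down, fun k hk => ?_⟩
  have hk' : i ≤ ULift.up k := hk
  have hk1 : i ≤ ULift.up (k + 1) := le_trans hk' (by exact Nat.le_succ k)
  haveI h1 : IsIso ((Functor.ofSequence f).map (homOfLE (show i.down ≤ k from hk))) := by
    have := hi (ULift.up k) hk'
    have e1 : (mono.functor ⋙ Functor.ofSequence f).map (homOfLE hk')
        = (Functor.ofSequence f).map (homOfLE (show i.down ≤ k from hk)) := by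
      show (Functor.ofSequence f).map (mono.functor.map (homOfLE hk')) = _
      exact congrArg (Functor.ofSequence f).map
        (Subsingleton.elim (mono.functor.map (homOfLE hk')) (homOfLE (show i.down ≤ k from hk)))
    rwa [e1] at this
  haveI h2 : IsIso ((Functor.ofSequence f).map
      (homOfLE (show i.down ≤ k + 1 from le_trans hk (Nat.le_succ k)))) := by
    have := hi (ULift.up (k + 1)) hk1
    have e2 : (mono.functor ⋙ Functor.ofSequence f).map (homOfLE hk1)
        = (Functor.ofSequence f).map
            (homOfLE (show i.down ≤ k + 1 from le_trans hk (Nat.le_succ k))) := by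
      show (Functor.ofSequence f).map (mono.functor.map (homOfLE hk1)) = _
      exact congrArg (Functor.ofSequence f).map
        (Subsingleton.elim (mono.functor.map (homOfLE hk1))
          (homOfLE (show i.down ≤ k + 1 from le_trans hk (Nat.le_succ k))))
    rwa [e2] at this
  have comp : (Functor.ofSequence f).map (homOfLE (show i.down ≤ k from hk)) ≫
      (Functor.ofSequence f).map (homOfLE (Nat.le_add_right k 1))
      = (Functor.ofSequence f).map
          (homOfLE (show i.down ≤ k + 1 from le_trans hk (Nat.le_succ k))) := by
    rw [← Functor.map_comp]
    exact congrArg (Functor.ofSequence f).map (Subsingleton.elim _ _)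
  have : IsIso ((Functor.ofSequence f).map (homOfLE (Nat.le_add_right k 1))) :=
    IsIso.of_isIso_fac_left comp
  rwa [Functor.ofSequence_map_homOfLE_succ f k] at this

lemma cofork_mk {E : Type u₂} [Category.{v₂} E] [HasCoequalizers E]
    {Xn Xm Xm' : E} (la lb : Xn ⟶ Xm) (lg : Xm ⟶ Xm') (lσ : Xm' ⟶ Xm')
    (huniv : ∀ {T : E} (s : Xm ⟶ T), la ≫ s = lb ≫ s →
      ∃! t : Xm' ⟶ T, lσ ≫ t = 𝟙 Xm' ≫ t ∧ lg ≫ t = s)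
    (w : la ≫ (lg ≫ coequalizer.π lσ (𝟙 Xm')) = lb ≫ (lg ≫ coequalizer.π lσ (𝟙 Xm'))) :
    Nonempty (IsColimit (Cofork.ofπ (lg ≫ coequalizer.π lσ (𝟙 Xm')) w)) := by
  refine ⟨Cofork.IsColimit.mk _
    (fun s => coequalizer.desc (huniv s.π s.condition).choose
      (huniv s.π s.condition).choose_spec.1.1)
    (fun s => ?_) (fun s r hr => ?_)⟩
  · rw [Cofork.π_ofπ, Category.assoc, coequalizer.π_desc]
    exact (huniv s.π s.condition).choose_spec.1.2
  · show r = coequalizer.desc (huniv s.π s.condition).choose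
      (huniv s.π s.condition).choose_spec.1.1
    apply coequalizer.hom_ext (f := lσ) (g := 𝟙 Xm')
    rw [coequalizer.π_desc]
    refine (huniv s.π s.condition).choose_spec.2 _ ⟨?_, ?_⟩
    · rw [Category.id_comp, ← Category.assoc,
        coequalizer.condition lσ (𝟙 Xm'), Category.id_comp]
    · rw [Cofork.π_ofπ] at hr
      rw [← Category.assoc]
      exact hr

lemma final {D : Type u} [Category.{v} D] [HasPushouts D]
    {E : Type u₂} [Category.{v₂} E] [HasCoequalizers E]
    (L : D ⥤ E)
    (hL : ∀ {W X Y Z : D} (f : W ⟶ X) (g : W ⟶ Y) (inl : X ⟶ Z) (inr : Y ⟶ Z),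
      IsPushout f g inl inr → IsPushout (L.map f) (L.map g) (L.map inl) (L.map inr))
    (hD : CoWellFounded.{w} D) {n m : D} (α β : n ⟶ m) :
    ∃ (m' : D) (g : m ⟶ m') (σ : Aut m')
      (w : L.map α ≫ (L.map g ≫ coequalizer.π (L.map σ.hom) (𝟙 (L.obj m'))) =
          L.map β ≫ (L.map g ≫ coequalizer.π (L.map σ.hom) (𝟙 (L.obj m')))),
      Nonempty (IsColimit (Cofork.ofπ
        (L.map g ≫ coequalizer.π (L.map σ.hom) (𝟙 (L.obj m'))) w)) := by
  classical
  let P : ParPair D := ⟨n, m, α, β⟩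
  obtain ⟨N₁, hN₁⟩ := stabilize hD (fun k => (seq P k).tgt) (fun k => (seq P (k+1)).a)
  obtain ⟨N₂, hN₂⟩ := stabilize hD (fun k => (seq P k).tgt) (fun k => (seq P (k+1)).b)
  obtain ⟨M, hM1, hM2⟩ : ∃ M, N₁ ≤ M ∧ N₂ ≤ M :=
    ⟨max N₁ N₂, le_max_left _ _, le_max_right _ _⟩
  haveI hA : IsIso (seq P (M+1)).a := hN₁ M hM1
  haveI hB : IsIso (seq P (M+1)).b := hN₂ M hM2
  set m' : D := (seq P (M+1)).tgt with hm'
  set σ : Aut m' := (asIso (seq P (M+1)).a).symm ≪≫ asIso (seq P (M+1)).b with hσ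
  have hσhom : L.map σ.hom = inv (L.map (seq P (M+1)).a) ≫ L.map (seq P (M+1)).b := by
    simp [hσ, Functor.map_comp]
  have e : L.map (seq P (M+1)).a ≫ L.map σ.hom = L.map (seq P (M+1)).b := by
    rw [hσhom, ← Category.assoc, IsIso.hom_inv_id, Category.id_comp]
  have hiff : ∀ {T : E} (t : L.obj m' ⟶ T),
      (L.map (seq P (M+1)).a ≫ t = L.map (seq P (M+1)).b ≫ t) ↔
      (L.map σ.hom ≫ t = 𝟙 (L.obj m') ≫ t) := by
    intro T t
    constructor
    · intro ht
      rw [Category.id_comp, hσhom, Category.assoc, ← ht, ← Category.assoc,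
        IsIso.inv_hom_id, Category.id_comp]
    · intro ht
      rw [Category.id_comp] at ht
      calc L.map (seq P (M+1)).a ≫ t
          = L.map (seq P (M+1)).a ≫ L.map σ.hom ≫ t := by rw [ht]
        _ = (L.map (seq P (M+1)).a ≫ L.map σ.hom) ≫ t := (Category.assoc _ _ _).symm
        _ = L.map (seq P (M+1)).b ≫ t := by rw [e]
  have huniv : ∀ {T : E} (s : L.obj m ⟶ T), L.map α ≫ s = L.map β ≫ s →
      ∃! t : L.obj m' ⟶ T,
        L.map σ.hom ≫ t = 𝟙 (L.obj m') ≫ t ∧ L.map (gmap P (M+1)) ≫ t = s := by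
    intro T s hs
    obtain ⟨t, ⟨h1, h2⟩, hu⟩ := main L hL P (M+1) s hs
    exact ⟨t, ⟨(hiff t).1 h1, h2⟩, fun y hy => hu y ⟨(hiff y).2 hy.1, hy.2⟩⟩
  have hAB : L.map (seq P (M+1)).a ≫ coequalizer.π (L.map σ.hom) (𝟙 (L.obj m'))
      = L.map (seq P (M+1)).b ≫ coequalizer.π (L.map σ.hom) (𝟙 (L.obj m')) :=
    (hiff _).2 (coequalizer.condition _ _)
  have hw : L.map α ≫ (L.map (gmap P (M+1)) ≫ coequalizer.π (L.map σ.hom) (𝟙 (L.obj m'))) =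
      L.map β ≫ (L.map (gmap P (M+1)) ≫ coequalizer.π (L.map σ.hom) (𝟙 (L.obj m'))) :=
    fwd L P (M+1) _ hAB
  exact ⟨m', gmap P (M+1), σ, hw,
    cofork_mk (L.map α) (L.map β) (L.map (gmap P (M+1))) (L.map σ.hom) huniv hw⟩

end Stmt4Proof

/-- under (C1), (C2), (C3), the coequalizer of a parallel pair of morphisms
between representable atoms is of the form `ℓ(m) → ℓ(m') → ℓ(m')∕σ` for some
representable atom `m'` and automorphism `σ` of `m'`. -/
theorem stmt4 {C : Type u} [SmallCategory C] (J : GrothendieckTopology Cᵒᵖ)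
    (hJ : IsAtomicTopology J)
    (h1 : CondC1 J) (h2 : CondC2 J) (h3 : CondC3 C) :
    ∀ {n m : Cᵒᵖ} (α β : n ⟶ m),
      ∃ (m' : Cᵒᵖ) (g : m ⟶ m') (σ : Aut m')
        (w : (atomicYoneda J).map α ≫ ((atomicYoneda J).map g ≫
              coequalizer.π ((atomicYoneda J).map σ.hom) (𝟙 ((atomicYoneda J).obj m'))) =
            (atomicYoneda J).map β ≫ ((atomicYoneda J).map g ≫
              coequalizer.π ((atomicYoneda J).map σ.hom) (𝟙 ((atomicYoneda J).obj m')))),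
        Nonempty (IsColimit (Cofork.ofπ ((atomicYoneda J).map g ≫
          coequalizer.π ((atomicYoneda J).map σ.hom) (𝟙 ((atomicYoneda J).obj m'))) w)) := by
  intro n m α β
  haveI : HasPushouts Cᵒᵖ := h2.1
  exact Stmt4Proof.final (atomicYoneda J)
    (fun f g inl inr h => h2.2 f g inl inr h) h3 α β
end

section
/- Let C be a category with pullbacks in which every morphism is a monomorphism, let F : C → Set be a pullback-preserving functor, and let G be a subgroup of the automorphism group of F in the functor category [C, Set]. Then the pointwise quotient F∕G, given on objects by X ↦ F(X)∕G, preserves pullbacks. -/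
open CategoryTheory Limits Opposite

universe w v u

universe v₂ u₂

/-- A functor preserves pullbacks: it sends every pullback square to a pullback
square. -/
def PreservesPullbacksFunc {C : Type u} [Category.{v} C] {D : Type u₂} [Category.{v₂} D]
    (F : C ⥤ D) : Prop :=
  ∀ {W X Y Z : C} (fst : W ⟶ X) (snd : W ⟶ Y) (f : X ⟶ Z) (g : Y ⟶ Z),
    IsPullback fst snd f g → IsPullback (F.map fst) (F.map snd) (F.map f) (F.map g)

/-- The pointwise quotient of `F : C ⥤ Type` by a subgroup `G` of the group of natural
automorphisms of `F`, with the induced maps on quotients. -/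
def quotBySubgroup {C : Type u} [Category.{v} C] (F : C ⥤ Type w)
    (G : Subgroup (Aut F)) : C ⥤ Type w where
  obj X := Quot (fun x y : F.obj X => ∃ σ ∈ G, σ.hom.app X x = y)
  map {X Y} u := TypeCat.ofHom (Quot.map (F.map u)
    (ra := fun x y : F.obj X => ∃ σ ∈ G, σ.hom.app X x = y)
    (rb := fun x y : F.obj Y => ∃ σ ∈ G, σ.hom.app Y x = y)
    (by
      rintro x y ⟨σ, hσ, rfl⟩
      exact ⟨σ, hσ, by simpa using congrFun (σ.hom.naturality u) x⟩))
  map_id X := by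
    ext x
    obtain ⟨a, rfl⟩ := Quot.exists_rep x
    show Quot.mk _ (F.map (𝟙 X) a) = Quot.mk _ a
    rw [F.map_id]
    rfl
  map_comp u v := by
    ext x
    obtain ⟨a, rfl⟩ := Quot.exists_rep x
    show Quot.mk _ (F.map (u ≫ v) a) = Quot.mk _ (F.map v (F.map u a))
    rw [F.map_comp]
    rfl

/-- The defining relation of `quotBySubgroup` is an equivalence relation. -/
lemma relEquiv {C : Type u} [Category.{v} C] (F : C ⥤ Type w)
    (G : Subgroup (Aut F)) (X : C) :
    Equivalence (fun x y : F.obj X => ∃ σ ∈ G, σ.hom.app X x = y) := by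
  constructor
  · intro a
    exact ⟨1, G.one_mem, rfl⟩
  · rintro a b ⟨σ, hσ, rfl⟩
    refine ⟨σ⁻¹, G.inv_mem hσ, ?_⟩
    exact ConcreteCategory.congr_hom (σ.hom_inv_id_app X) a
  · rintro a b c ⟨σ, hσ, rfl⟩ ⟨τ, hτ, rfl⟩
    exact ⟨τ * σ, G.mul_mem hτ hσ, rfl⟩

lemma quot_mk_eq_iff {C : Type u} [Category.{v} C] (F : C ⥤ Type w)
    (G : Subgroup (Aut F)) (X : C) (a b : F.obj X) :
    (Quot.mk (fun x y : F.obj X => ∃ σ ∈ G, σ.hom.app X x = y) a =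
      Quot.mk _ b) ↔ ∃ σ ∈ G, σ.hom.app X a = b := by
  rw [Quot.eq, (relEquiv F G X).eqvGen_iff]

/-- if every morphism of `C` is a monomorphism and `C` has pullbacks,
then the pointwise quotient of a pullback-preserving functor `F : C ⥤ Type` by a
subgroup `G` of its group of natural automorphisms preserves pullbacks. -/
theorem stmt11 {C : Type u} [Category.{v} C] [HasPullbacks C]
    (hmono : ∀ {X Y : C} (f : X ⟶ Y), Mono f)
    (F : C ⥤ Type w) (hF : PreservesPullbacksFunc F)
    (G : Subgroup (Aut F)) :
    PreservesPullbacksFunc (quotBySubgroup F G) := by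
  -- every `F.map u` is injective
  have hinj : ∀ {A B : C} (u : A ⟶ B), Function.Injective (F.map u) := by
    intro A B u a b hab
    have hm : Mono u := hmono u
    have h1 : IsPullback (𝟙 A) (𝟙 A) u u := IsKernelPair.id_of_mono u
    have h2 := hF _ _ _ _ h1
    rw [F.map_id] at h2
    have ha := PullbackCone.IsLimit.equivPullbackObj_symm_apply_fst h2.isLimit ⟨(a, b), hab⟩
    have hb := PullbackCone.IsLimit.equivPullbackObj_symm_apply_snd h2.isLimit ⟨(a, b), hab⟩
    simp only [IsPullback.cone_fst, IsPullback.cone_snd, types_id_apply] at ha hb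
    exact ha.symm.trans hb
  intro W X Y Z fst snd f g sq
  set Q := quotBySubgroup F G with hQ
  have hcomm : CommSq (Q.map fst) (Q.map snd) (Q.map f) (Q.map g) := by
    constructor
    rw [← Q.map_comp, ← Q.map_comp, sq.w]
  refine IsPullback.of_isLimit' hcomm ?_
  refine (PullbackCone.isLimitEquivBijective hcomm.cone).symm ⟨?_, ?_⟩
  · -- injectivity
    intro p q h
    obtain ⟨a, rfl⟩ := Quot.exists_rep p
    obtain ⟨b, rfl⟩ := Quot.exists_rep q
    have h1 : Q.map fst (Quot.mk _ a) = Q.map fst (Quot.mk _ b) :=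
      congrArg (fun t => t.1.1) h
    have h2 : Quot.mk _ (F.map fst a) = Quot.mk _ (F.map fst b) := h1
    rw [quot_mk_eq_iff] at h2
    obtain ⟨σ, hσ, hab⟩ := h2
    have hnat := ConcreteCategory.congr_hom (σ.hom.naturality fst) a
    simp only [types_comp_apply] at hnat
    rw [hnat] at hab
    have : σ.hom.app W a = b := hinj fst hab
    exact Quot.sound ⟨σ, hσ, this⟩
  · -- surjectivity
    rintro ⟨⟨qx, qy⟩, h⟩
    obtain ⟨x, rfl⟩ := Quot.exists_rep qx
    obtain ⟨y, rfl⟩ := Quot.exists_rep qy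
    have h2 : Quot.mk _ (F.map f x) = Quot.mk _ (F.map g y) := h
    rw [quot_mk_eq_iff] at h2
    obtain ⟨σ, hσ, hxy⟩ := h2
    have hnat := ConcreteCategory.congr_hom (σ.hom.naturality f) x
    simp only [types_comp_apply] at hnat
    rw [hnat] at hxy
    -- use the pullback property of the F-square
    have hP := hF fst snd f g sq
    set p : Limits.Types.PullbackObj (F.map f) (F.map g) := ⟨(σ.hom.app X x, y), hxy⟩
    set wpt := (PullbackCone.IsLimit.equivPullbackObj hP.isLimit).symm p with hw
    have hfst := PullbackCone.IsLimit.equivPullbackObj_symm_apply_fst hP.isLimit p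
    have hsnd := PullbackCone.IsLimit.equivPullbackObj_symm_apply_snd hP.isLimit p
    simp only [IsPullback.cone_fst, IsPullback.cone_snd] at hfst hsnd
    rw [← hw] at hfst hsnd
    refine ⟨Quot.mk _ wpt, ?_⟩
    apply Subtype.ext
    apply Prod.ext
    · show Q.map fst (Quot.mk _ wpt) = Quot.mk _ x
      show Quot.mk _ (F.map fst wpt) = Quot.mk _ x
      refine (congrArg (Quot.mk _) hfst).trans ?_
      exact (Quot.sound ⟨σ, hσ, rfl⟩).symm
    · show Q.map snd (Quot.mk _ wpt) = Quot.mk _ y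
      show Quot.mk _ (F.map snd wpt) = Quot.mk _ y
      exact congrArg (Quot.mk _) hsnd
end

section
/- Let I be a set. The category T_I of finitary I-trees and embeddings has amalgamation: for every pair of embeddings f : X → A and g : X → B of finitary I-trees, there exist a finitary I-tree C and embeddings h : A → C and k : B → C with f ≫ h = g ≫ k. -/
open CategoryTheory Limits Opposite

/-- A full binary tree: a type with a root and a child relation such that every node
has exactly zero or two children and every node is reached from the root by a unique
path. -/
structure BinTree : Type 1 where
  carrier : Type
  root : carrier
  child : carrier → carrier → Prop
  children_empty_or_pair : ∀ x : carrier,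
    {y | child x y} = (∅ : Set carrier) ∨
    ∃ a b : carrier, a ≠ b ∧ {y | child x y} = {a, b}
  unique_path : ∀ y : carrier, ∃! l : List carrier,
    l.Chain' child ∧ l.head? = some root ∧ l.getLast? = some y

namespace BinTree

/-- `f` is a branch of `T`: an infinite sequence starting at the root and following the
child relation. -/
def IsBranch (T : BinTree) (f : ℕ → T.carrier) : Prop :=
  f 0 = T.root ∧ ∀ n, T.child (f n) (f (n + 1))

/-- The type of branches of `T`. -/
def Branch (T : BinTree) : Type := {f : ℕ → T.carrier // T.IsBranch f}

/-- A node lies on a branch. -/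
def OnBranch (T : BinTree) (x : T.carrier) : Prop :=
  ∃ (b : T.Branch) (n : ℕ), b.1 n = x

end BinTree

/-- An `I`-tree: a full binary tree together with a partial labeling of its branches
by elements of `I`. -/
structure ITree (I : Type) extends BinTree where
  label : toBinTree.Branch → Option I

namespace ITree

variable {I : Type}

/-- An embedding of `I`-trees: an injective map preserving the root, reflecting and
preserving the child relation, and preserving the labels of branches. -/
structure Emb (X Y : ITree I) where
  toFun : X.carrier → Y.carrier
  inj : Function.Injective toFun
  map_root : toFun X.root = Y.root
  map_child : ∀ a b : X.carrier, X.child a b ↔ Y.child (toFun a) (toFun b)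
  map_label : ∀ (b : X.toBinTree.Branch) (c : Y.toBinTree.Branch),
    (∀ n, c.1 n = toFun (b.1 n)) → ∀ i : I, X.label b = some i → Y.label c = some i

theorem Emb.ext' {X Y : ITree I} {f g : Emb X Y} (h : f.toFun = g.toFun) : f = g := by
  cases f; cases g; cases h; rfl

/-- The image of a branch under an embedding. -/
def Emb.mapBranch {X Y : ITree I} (f : Emb X Y) (b : X.toBinTree.Branch) :
    Y.toBinTree.Branch :=
  ⟨fun n => f.toFun (b.1 n), by
    constructor
    · show f.toFun (b.1 0) = Y.root
      rw [b.2.1, f.map_root]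
    · intro n
      exact (f.map_child _ _).1 (b.2.2 n)⟩

/-- The identity embedding. -/
def idEmb (X : ITree I) : Emb X X where
  toFun := id
  inj := fun a b h => h
  map_root := rfl
  map_child := fun _ _ => Iff.rfl
  map_label := by
    intro b c hbc i hi
    have : c = b := Subtype.ext (funext fun n => hbc n)
    rw [this]
    exact hi

/-- Composition of embeddings. -/
def compEmb {X Y Z : ITree I} (f : Emb X Y) (g : Emb Y Z) : Emb X Z where
  toFun := g.toFun ∘ f.toFun
  inj := g.inj.comp f.inj
  map_root := by
    show g.toFun (f.toFun X.root) = Z.root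
    rw [f.map_root, g.map_root]
  map_child := fun a b => (f.map_child a b).trans (g.map_child _ _)
  map_label := by
    intro b c hbc i hi
    exact g.map_label (f.mapBranch b) c (fun n => hbc n) i
      (f.map_label b (f.mapBranch b) (fun _ => rfl) i hi)

/-- An `I`-tree is finitary if it has finitely many branches, finitely many nodes whose
parent lies on no branch, and a total labeling function. -/
def Finitary (X : ITree I) : Prop :=
  Finite X.toBinTree.Branch ∧
  Finite {x : X.carrier | ¬ ∃ p, X.child p x ∧ X.toBinTree.OnBranch p} ∧
  ∀ b, (X.label b).isSome

end ITree

/-- The category of `I`-trees and embeddings. -/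
instance ITreeCat (I : Type) : Category (ITree I) where
  Hom := ITree.Emb
  id := ITree.idEmb
  comp := ITree.compEmb
  id_comp f := ITree.Emb.ext' rfl
  comp_id f := ITree.Emb.ext' rfl
  assoc f g h := ITree.Emb.ext' rfl

/-- The category `T_I` of finitary `I`-trees and embeddings. -/
abbrev FinITree (I : Type) : Type 1 := ObjectProperty.FullSubcategory (ITree.Finitary (I := I))

section PathLemmas

open scoped Classical

namespace BinTree

variable (T : BinTree)

noncomputable def pathTo (c : T.carrier) : List T.carrier :=
  (T.unique_path c).choose

lemma pathTo_spec (c : T.carrier) :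
    (T.pathTo c).Chain' T.child ∧ (T.pathTo c).head? = some T.root ∧
      (T.pathTo c).getLast? = some c :=
  (T.unique_path c).choose_spec.1

lemma pathTo_unique {c : T.carrier} {l : List T.carrier} (h1 : l.Chain' T.child)
    (h2 : l.head? = some T.root) (h3 : l.getLast? = some c) : l = T.pathTo c :=
  (T.unique_path c).choose_spec.2 l ⟨h1, h2, h3⟩

lemma pathTo_ne_nil (c : T.carrier) : T.pathTo c ≠ [] := by
  intro h
  have := (T.pathTo_spec c).2.1
  rw [h] at this
  simp at this

lemma pathTo_root : T.pathTo T.root = [T.root] := by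
  refine (T.pathTo_unique ?_ ?_ ?_).symm <;> simp [List.Chain']

lemma pathTo_child {p c : T.carrier} (h : T.child p c) :
    T.pathTo c = T.pathTo p ++ [c] := by
  refine (T.pathTo_unique ?_ ?_ ?_).symm
  · rw [List.Chain', List.isChain_append]
    refine ⟨(T.pathTo_spec p).1, List.isChain_singleton c, ?_⟩
    intro x hx y hy
    rw [(T.pathTo_spec p).2.2] at hx
    simp at hx hy
    subst hx; subst hy; exact h
  · obtain ⟨a, l, hl⟩ := List.exists_cons_of_ne_nil (T.pathTo_ne_nil p)
    have := (T.pathTo_spec p).2.1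
    rw [hl] at this ⊢
    simpa using this
  · simp

lemma not_child_root {p : T.carrier} : ¬ T.child p T.root := by
  intro h
  have h1 := T.pathTo_child h
  rw [T.pathTo_root] at h1
  have h2 := congrArg List.length h1
  rw [List.length_append] at h2
  simp at h2
  exact T.pathTo_ne_nil p h2

lemma exists_parent {c : T.carrier} (h : c ≠ T.root) : ∃ p, T.child p c := by
  rcases List.eq_nil_or_concat (T.pathTo c) with h1 | ⟨l', a, h1⟩
  · exact absurd h1 (T.pathTo_ne_nil c)
  rw [List.concat_eq_append] at h1
  have hspec := T.pathTo_spec c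
  rw [h1] at hspec
  have ha : a = c := by
    have := hspec.2.2
    simpa using this
  subst ha
  rcases List.eq_nil_or_concat l' with h2 | ⟨l'', p, h2⟩
  · rw [h2] at hspec
    simp at hspec
    exact absurd hspec.2 h
  refine ⟨p, ?_⟩
  rw [List.concat_eq_append] at h2
  subst h2
  have hch := hspec.1
  rw [List.Chain', List.isChain_append] at hch
  have hch := hch.2.2
  simp at hch
  exact hch

lemma parent_unique {p p' c : T.carrier} (h : T.child p c) (h' : T.child p' c) :
    p = p' := by
  have h1 := T.pathTo_child h
  have h2 := T.pathTo_child h'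
  rw [h1] at h2
  have h3 : T.pathTo p = T.pathTo p' := by
    have := List.append_inj_left' h2.symm rfl
    exact this.symm
  have e1 := (T.pathTo_spec p).2.2
  have e2 := (T.pathTo_spec p').2.2
  rw [h3, e2] at e1
  exact (Option.some_injective _ e1).symm

noncomputable def parent (c : T.carrier) : T.carrier :=
  if h : ∃ p, T.child p c then h.choose else c

lemma child_parent {c : T.carrier} (h : c ≠ T.root) : T.child (T.parent c) c := by
  have he := T.exists_parent h
  rw [parent, dif_pos he]
  exact he.choose_spec

lemma parent_eq {p c : T.carrier} (h : T.child p c) : T.parent c = p := by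
  have hcr : c ≠ T.root := by
    intro hc; subst hc; exact T.not_child_root h
  exact T.parent_unique (T.child_parent hcr) h

noncomputable def depth (c : T.carrier) : ℕ := (T.pathTo c).length

lemma depth_pos (c : T.carrier) : 0 < T.depth c :=
  List.length_pos_iff.2 (T.pathTo_ne_nil c)

lemma depth_child {p c : T.carrier} (h : T.child p c) :
    T.depth c = T.depth p + 1 := by
  rw [depth, depth, T.pathTo_child h]
  simp

lemma depth_root : T.depth T.root = 1 := by rw [depth, pathTo_root]; rfl

end BinTree

end PathLemmas
section Orientations

open scoped Classical

namespace BinTree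

variable (T : BinTree)

lemma exists_pair {p c : T.carrier} (h : T.child p c) :
    ∃ a b : T.carrier, a ≠ b ∧ {y | T.child p y} = {a, b} := by
  refine (T.children_empty_or_pair p).resolve_left ?_
  intro he
  have : c ∈ {y | T.child p y} := h
  rw [he] at this
  exact this

noncomputable def pairOf (p : T.carrier) : T.carrier × T.carrier :=
  if h : ∃ a b : T.carrier, a ≠ b ∧ {y | T.child p y} = {a, b} then
    (h.choose, h.choose_spec.choose)
  else (p, p)

lemma pairOf_spec {p c : T.carrier} (h : T.child p c) :
    (T.pairOf p).1 ≠ (T.pairOf p).2 ∧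
      {y | T.child p y} = {(T.pairOf p).1, (T.pairOf p).2} := by
  have he := T.exists_pair h
  rw [pairOf, dif_pos he]
  exact he.choose_spec.choose_spec

lemma child_mem_pair {p c : T.carrier} (h : T.child p c) :
    c = (T.pairOf p).1 ∨ c = (T.pairOf p).2 := by
  have hs := (T.pairOf_spec h).2
  have : c ∈ {y | T.child p y} := h
  rw [hs] at this
  simpa using this

lemma child_pair_fst {p c : T.carrier} (h : T.child p c) : T.child p (T.pairOf p).1 := by
  have hs := (T.pairOf_spec h).2
  have : (T.pairOf p).1 ∈ ({(T.pairOf p).1, (T.pairOf p).2} : Set T.carrier) := by simp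
  rw [← hs] at this
  exact this

lemma child_pair_snd {p c : T.carrier} (h : T.child p c) : T.child p (T.pairOf p).2 := by
  have hs := (T.pairOf_spec h).2
  have : (T.pairOf p).2 ∈ ({(T.pairOf p).1, (T.pairOf p).2} : Set T.carrier) := by simp
  rw [← hs] at this
  exact this

noncomputable def sib (c : T.carrier) : T.carrier :=
  if c = (T.pairOf (T.parent c)).1 then (T.pairOf (T.parent c)).2
  else (T.pairOf (T.parent c)).1

lemma sib_spec {p c : T.carrier} (h : T.child p c) :
    T.child p (T.sib c) ∧ T.sib c ≠ c := by
  have hp : T.parent c = p := T.parent_eq h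
  rw [sib, hp]
  rcases T.child_mem_pair h with h1 | h1
  · rw [if_pos h1]
    exact ⟨T.child_pair_snd h, by rw [h1]; exact (T.pairOf_spec h).1.symm⟩
  · have hne : c ≠ (T.pairOf p).1 := by
      intro hc
      exact (T.pairOf_spec h).1 (hc ▸ h1.symm ▸ rfl)
    rw [if_neg hne]
    exact ⟨T.child_pair_fst h, fun hc => hne hc.symm⟩

lemma eq_sib_of {p c c' : T.carrier} (h : T.child p c) (h' : T.child p c')
    (hne : c' ≠ c) : c' = T.sib c := by
  have hp : T.parent c = p := T.parent_eq h
  rw [sib, hp]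
  rcases T.child_mem_pair h with h1 | h1
  · rw [if_pos h1]
    rcases T.child_mem_pair h' with h2 | h2
    · exact absurd (h2.trans h1.symm) hne
    · exact h2
  · by_cases h2 : c = (T.pairOf p).1
    · rw [if_pos h2]
      rcases T.child_mem_pair h' with h3 | h3
      · exact absurd (h3.trans h2.symm) hne
      · exact h3
    · rw [if_neg h2]
      rcases T.child_mem_pair h' with h3 | h3
      · exact h3
      · rcases T.child_mem_pair h with h4 | h4
        · exact absurd h4 h2
        · exact absurd (h3.trans h4.symm) hne

/-- An orientation assigns distinct booleans to siblings. -/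
def IsOrientation (o : T.carrier → Bool) : Prop :=
  ∀ p c c', T.child p c → T.child p c' → c ≠ c' → o c ≠ o c'

noncomputable def pairBit (c : T.carrier) : Bool :=
  if c = (T.pairOf (T.parent c)).2 then true else false

lemma pairBit_distinct {p c c' : T.carrier} (h : T.child p c) (h' : T.child p c')
    (hne : c ≠ c') : T.pairBit c ≠ T.pairBit c' := by
  have hp : T.parent c = p := T.parent_eq h
  have hp' : T.parent c' = p := T.parent_eq h'
  rw [pairBit, pairBit, hp, hp']
  have hd := (T.pairOf_spec h).1
  rcases T.child_mem_pair h with h1 | h1 <;> rcases T.child_mem_pair h' with h2 | h2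
  · exact absurd (h1.trans h2.symm) hne
  · rw [if_neg (by rw [h1]; exact hd), if_pos h2]; simp
  · rw [if_pos h1, if_neg (by rw [h2]; exact hd)]; simp
  · exact absurd (h1.trans h2.symm) hne

lemma isOrientation_pairBit : T.IsOrientation T.pairBit :=
  fun _ _ _ h h' hne => T.pairBit_distinct h h' hne

/-- The binary-string coordinates of a node, relative to an orientation. -/
noncomputable def strOf (o : T.carrier → Bool) (c : T.carrier) : List Bool :=
  ((T.pathTo c).tail.map o).reverse

lemma strOf_root (o : T.carrier → Bool) : T.strOf o T.root = [] := by
  rw [strOf, pathTo_root]; rfl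

lemma strOf_child (o : T.carrier → Bool) {p c : T.carrier} (h : T.child p c) :
    T.strOf o c = o c :: T.strOf o p := by
  rw [strOf, strOf, T.pathTo_child h]
  obtain ⟨a, l, hl⟩ := List.exists_cons_of_ne_nil (T.pathTo_ne_nil p)
  rw [hl]
  simp

lemma eq_root_of_strOf_nil {o : T.carrier → Bool} {c : T.carrier}
    (h : T.strOf o c = []) : c = T.root := by
  by_contra hc
  rw [T.strOf_child o (T.child_parent hc)] at h
  simp at h

lemma strOf_length (o : T.carrier → Bool) (c : T.carrier) :
    (T.strOf o c).length + 1 = T.depth c := by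
  rw [strOf, depth]
  obtain ⟨a, l, hl⟩ := List.exists_cons_of_ne_nil (T.pathTo_ne_nil c)
  rw [hl]
  simp

lemma strOf_inj {o : T.carrier → Bool} (ho : T.IsOrientation o) :
    Function.Injective (T.strOf o) := by
  suffices H : ∀ n c c', T.depth c ≤ n → T.strOf o c = T.strOf o c' → c = c' by
    intro c c' h
    exact H (T.depth c) c c' le_rfl h
  intro n
  induction n with
  | zero => intro c c' hc _; have := T.depth_pos c; omega
  | succ n ih =>
    intro c c' hc heq
    by_cases h1 : c = T.root
    · subst h1
      rw [T.strOf_root] at heq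
      exact (T.eq_root_of_strOf_nil heq.symm).symm
    · by_cases h2 : c' = T.root
      · subst h2
        rw [T.strOf_root] at heq
        exact T.eq_root_of_strOf_nil heq
      · have hp := T.child_parent h1
        have hp' := T.child_parent h2
        rw [T.strOf_child o hp, T.strOf_child o hp'] at heq
        have htail : T.strOf o (T.parent c) = T.strOf o (T.parent c') :=
          (List.cons.injEq _ _ _ _ ▸ heq).2
        have hhead : o c = o c' := (List.cons.injEq _ _ _ _ ▸ heq).1
        have hdp : T.depth (T.parent c) ≤ n := by
          have := T.depth_child hp
          omega
        have hpe := ih _ _ hdp htail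
        by_contra hne
        exact ho _ _ _ hp (hpe ▸ hp') hne hhead

lemma child_of_strOf {o : T.carrier → Bool} (ho : T.IsOrientation o)
    {p c : T.carrier} {b : Bool} (h : T.strOf o c = b :: T.strOf o p) :
    T.child p c := by
  have hc : c ≠ T.root := by
    intro hc; subst hc; rw [T.strOf_root] at h; simp at h
  have hp := T.child_parent hc
  rw [T.strOf_child o hp] at h
  have : T.strOf o (T.parent c) = T.strOf o p := (List.cons.injEq _ _ _ _ ▸ h).2
  rw [← T.strOf_inj ho this]
  exact hp

lemma strOf_down {o : T.carrier → Bool} {c : T.carrier} {b : Bool} {s : List Bool}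
    (h : T.strOf o c = b :: s) : ∃ p, T.child p c ∧ T.strOf o p = s := by
  have hc : c ≠ T.root := by
    intro hc; subst hc; rw [T.strOf_root] at h; simp at h
  have hp := T.child_parent hc
  refine ⟨T.parent c, hp, ?_⟩
  rw [T.strOf_child o hp] at h
  exact (List.cons.injEq _ _ _ _ ▸ h).2

lemma strOf_full {o : T.carrier → Bool} (ho : T.IsOrientation o)
    {c : T.carrier} {b : Bool} {s : List Bool} (h : T.strOf o c = b :: s) :
    ∃ c', T.strOf o c' = (!b) :: s := by
  obtain ⟨p, hp, hs⟩ := T.strOf_down h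
  have hsib := T.sib_spec hp
  refine ⟨T.sib c, ?_⟩
  rw [T.strOf_child o hsib.1, hs]
  have hb : o c = b := by
    rw [T.strOf_child o hp, hs] at h
    exact (List.cons.injEq _ _ _ _ ▸ h).1
  have : o (T.sib c) ≠ b := hb ▸ ho _ _ _ hsib.1 hp hsib.2
  cases hx : o (T.sib c) <;> cases b <;> simp_all

/-- Branch nodes have the expected depth. -/
lemma depth_branchNode (b : T.Branch) (n : ℕ) : T.depth (b.1 n) = n + 1 := by
  induction n with
  | zero => rw [b.2.1, T.depth_root]
  | succ n ih => rw [T.depth_child (b.2.2 n), ih]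

lemma branch_agree_down {b b' : T.Branch} {n : ℕ} (h : b.1 n = b'.1 n) :
    ∀ k ≤ n, b.1 k = b'.1 k := by
  induction n with
  | zero =>
    intro k hk
    have hk0 : k = 0 := by omega
    rw [hk0]; exact h
  | succ n ih =>
    intro k hk
    have hstep : b.1 n = b'.1 n := by
      have h1 : T.parent (b.1 (n+1)) = b.1 n := T.parent_eq (b.2.2 n)
      have h2 : T.parent (b'.1 (n+1)) = b'.1 n := T.parent_eq (b'.2.2 n)
      rw [← h1, ← h2, h]
    rcases Nat.lt_or_ge k (n+1) with hlt | hge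
    · exact ih hstep k (by omega)
    · have : k = n + 1 := by omega
      rw [this]; exact h

lemma exists_separation {b b' : T.Branch} (hne : b ≠ b') :
    ∃ n₀, ∀ n, n₀ ≤ n → b.1 n ≠ b'.1 n := by
  have : ¬ ∀ n, b.1 n = b'.1 n := by
    intro h
    exact hne (Subtype.ext (funext h))
  push_neg at this
  obtain ⟨n₀, hn₀⟩ := this
  exact ⟨n₀, fun n hn h => hn₀ (T.branch_agree_down h n₀ hn)⟩

end BinTree

end Orientations
section Extension

open scoped Classical

namespace ITree

variable {I : Type} {X Y : ITree I} (f : X.Emb Y)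

lemma Emb.root_iff (x : X.carrier) : f.toFun x = Y.root ↔ x = X.root := by
  constructor
  · intro h
    apply f.inj
    rw [h, f.map_root]
  · intro h; rw [h, f.map_root]

lemma Emb.range_child_closed {p : Y.carrier} {x : X.carrier}
    (h : Y.toBinTree.child p (f.toFun x)) : p ∈ Set.range f.toFun := by
  have hx : x ≠ X.root := by
    intro hx
    subst hx
    rw [f.map_root] at h
    exact Y.toBinTree.not_child_root h
  have hpc := X.toBinTree.child_parent hx
  have h2 : Y.toBinTree.child (f.toFun (X.toBinTree.parent x)) (f.toFun x) :=
    (f.map_child _ _).1 hpc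
  exact ⟨_, Y.toBinTree.parent_unique h2 h⟩

lemma Emb.branch_in_range (β : Y.toBinTree.Branch)
    (h : ∀ n, β.1 n ∈ Set.range f.toFun) :
    ∃ ξ : X.toBinTree.Branch, ∀ n, β.1 n = f.toFun (ξ.1 n) := by
  have hch : ∀ n, (h n).choose = Classical.choose (h n) := fun n => rfl
  have hspec : ∀ n, f.toFun ((h n).choose) = β.1 n := fun n => (h n).choose_spec
  have hbr : X.IsBranch (fun n => (h n).choose) := by
    constructor
    · have : f.toFun ((h 0).choose) = Y.root := by rw [hspec 0, β.2.1]
      exact (f.root_iff _).1 this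
    · intro n
      apply (f.map_child _ _).2
      rw [hspec n, hspec (n+1)]
      exact β.2.2 n
  exact ⟨⟨_, hbr⟩, fun n => (hspec n).symm⟩

lemma Emb.exists_exit (β : Y.toBinTree.Branch)
    (hbad : ¬ ∃ ξ : X.toBinTree.Branch, ∀ n, β.1 n = f.toFun (ξ.1 n)) :
    ∃ n₀, ∀ n, n₀ ≤ n → β.1 n ∉ Set.range f.toFun := by
  have hdown : ∀ n, β.1 (n+1) ∈ Set.range f.toFun → β.1 n ∈ Set.range f.toFun := by
    intro n ⟨x, hx⟩
    exact f.range_child_closed (x := x) (hx ▸ β.2.2 n)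
  have hex : ∃ n₀, β.1 n₀ ∉ Set.range f.toFun := by
    by_contra hc
    push_neg at hc
    exact hbad (f.branch_in_range β hc)
  obtain ⟨n₀, hn₀⟩ := hex
  refine ⟨n₀, fun n hn hmem => hn₀ ?_⟩
  clear hn₀
  induction n with
  | zero =>
    have : n₀ = 0 := by omega
    rw [this]; exact hmem
  | succ n ih =>
    rcases Nat.lt_or_ge n₀ (n+1) with hlt | hge
    · exact ih (by omega) (hdown n hmem)
    · have : n₀ = n + 1 := by omega
      rw [this]; exact hmem

/-- Extension of an orientation along an embedding, with a default value off the
image. -/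
noncomputable def extOrient (oX : X.carrier → Bool) (dflt : Y.carrier → Bool) :
    Y.carrier → Bool := fun c =>
  if h : ∃ x, f.toFun x = c then oX h.choose
  else if h' : ∃ x, f.toFun x = Y.toBinTree.sib c then !(oX h'.choose)
  else dflt c

lemma extOrient_eq (oX : X.carrier → Bool) (dflt : Y.carrier → Bool) (x : X.carrier) :
    extOrient f oX dflt (f.toFun x) = oX x := by
  have h : ∃ x', f.toFun x' = f.toFun x := ⟨x, rfl⟩
  rw [extOrient, dif_pos h, f.inj h.choose_spec]

lemma extOrient_eq_dflt (oX : X.carrier → Bool) (dflt : Y.carrier → Bool)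
    {c : Y.carrier} (h1 : ¬ ∃ x, f.toFun x = c)
    (h2 : ¬ ∃ x, f.toFun x = Y.toBinTree.sib c) :
    extOrient f oX dflt c = dflt c := by
  rw [extOrient, dif_neg h1, dif_neg h2]

lemma isOrientation_extOrient {oX : X.carrier → Bool} (hoX : X.toBinTree.IsOrientation oX)
    {dflt : Y.carrier → Bool}
    (hd : ∀ p c c', Y.toBinTree.child p c → Y.toBinTree.child p c' → c ≠ c' →
      dflt c ≠ dflt c') :
    Y.toBinTree.IsOrientation (extOrient f oX dflt) := by
  intro p c c' hc hc' hne
  have hsib : c' = Y.toBinTree.sib c := Y.toBinTree.eq_sib_of hc hc' (Ne.symm hne)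
  have hsib' : c = Y.toBinTree.sib c' := Y.toBinTree.eq_sib_of hc' hc hne
  by_cases h1 : ∃ x, f.toFun x = c
  · obtain ⟨x, rfl⟩ := h1
    rw [extOrient_eq]
    by_cases h2 : ∃ x, f.toFun x = c'
    · obtain ⟨x', rfl⟩ := h2
      rw [extOrient_eq]
      -- x and x' are siblings in X
      have hxr : x ≠ X.root := by
        intro hx; subst hx; rw [f.map_root] at hc; exact Y.toBinTree.not_child_root hc
      have hxr' : x' ≠ X.root := by
        intro hx; subst hx; rw [f.map_root] at hc'; exact Y.toBinTree.not_child_root hc'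
      have hp1 : Y.toBinTree.child (f.toFun (X.toBinTree.parent x)) (f.toFun x) :=
        (f.map_child _ _).1 (X.toBinTree.child_parent hxr)
      have hp2 : Y.toBinTree.child (f.toFun (X.toBinTree.parent x')) (f.toFun x') :=
        (f.map_child _ _).1 (X.toBinTree.child_parent hxr')
      have he1 : f.toFun (X.toBinTree.parent x) = p := Y.toBinTree.parent_unique hp1 hc
      have he2 : f.toFun (X.toBinTree.parent x') = p := Y.toBinTree.parent_unique hp2 hc'
      have hpp : X.toBinTree.parent x = X.toBinTree.parent x' := f.inj (he1.trans he2.symm)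
      have hxx : x ≠ x' := fun h => hne (congrArg f.toFun h)
      exact hoX _ _ _ (X.toBinTree.child_parent hxr)
        (hpp ▸ X.toBinTree.child_parent hxr') hxx
    · rw [extOrient, dif_neg h2, dif_pos (show ∃ x'', f.toFun x'' = Y.toBinTree.sib c' from ⟨x, hsib' ▸ rfl⟩)]
      set hh : ∃ x'', f.toFun x'' = Y.toBinTree.sib c' :=
        ⟨x, hsib' ▸ rfl⟩ with hhdef
      have : hh.choose = x := f.inj (hh.choose_spec.trans hsib'.symm)
      rw [this]
      simp
  · by_cases h2 : ∃ x, f.toFun x = c'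
    · obtain ⟨x', rfl⟩ := h2
      rw [extOrient_eq]
      rw [extOrient, dif_neg h1, dif_pos (show ∃ x'', f.toFun x'' = Y.toBinTree.sib c from ⟨x', hsib ▸ rfl⟩)]
      set hh : ∃ x'', f.toFun x'' = Y.toBinTree.sib c := ⟨x', hsib ▸ rfl⟩ with hhdef
      have : hh.choose = x' := f.inj (hh.choose_spec.trans hsib.symm)
      rw [this]
      simp
    · have h1' : ¬ ∃ x, f.toFun x = Y.toBinTree.sib c := by
        rw [← hsib]; exact h2
      have h2' : ¬ ∃ x, f.toFun x = Y.toBinTree.sib c' := by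
        rw [← hsib']; exact h1
      rw [extOrient_eq_dflt f oX dflt h1 h1', extOrient_eq_dflt f oX dflt h2 h2']
      exact hd p c c' hc hc' hne

lemma strOf_extOrient {oX : X.carrier → Bool} (dflt : Y.carrier → Bool) :
    ∀ x, Y.toBinTree.strOf (extOrient f oX dflt) (f.toFun x) = X.toBinTree.strOf oX x := by
  suffices H : ∀ n x, X.toBinTree.depth x ≤ n →
      Y.toBinTree.strOf (extOrient f oX dflt) (f.toFun x) = X.toBinTree.strOf oX x by
    intro x; exact H _ x le_rfl
  intro n
  induction n with
  | zero => intro x hx; have := X.toBinTree.depth_pos x; omega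
  | succ n ih =>
    intro x hx
    by_cases hr : x = X.root
    · subst hr
      rw [f.map_root, Y.toBinTree.strOf_root, X.toBinTree.strOf_root]
    · have hp := X.toBinTree.child_parent hr
      have hp' : Y.toBinTree.child (f.toFun (X.toBinTree.parent x)) (f.toFun x) :=
        (f.map_child _ _).1 hp
      rw [Y.toBinTree.strOf_child _ hp', X.toBinTree.strOf_child _ hp,
        extOrient_eq, ih _ (by have := X.toBinTree.depth_child hp; omega)]

end ITree

end Extension
section Diagonal

open scoped Classical

namespace ITree

variable {I : Type} {X B : ITree I}

/-- There is an orientation of `B` compatible with `g` and `oX` whose branch bit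
sequences, for branches not coming from `X`, avoid every member of a given countable
family of bit sequences. -/
lemma exists_good_orient (g : X.Emb B) {oX : X.carrier → Bool}
    (hoX : X.toBinTree.IsOrientation oX) (hfin : Finite B.toBinTree.Branch)
    {κ : Type} (eA : κ → ℕ) (heA : Function.Injective eA) (seq : κ → ℕ → Bool) :
    ∃ oB : B.carrier → Bool, B.toBinTree.IsOrientation oB ∧
      (∀ x, B.toBinTree.strOf oB (g.toFun x) = X.toBinTree.strOf oX x) ∧
      (∀ (β : B.toBinTree.Branch) (a : κ),
        (¬ ∃ ξ : X.toBinTree.Branch, ∀ n, β.1 n = g.toFun (ξ.1 n)) →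
        ∃ n, oB (β.1 (n+1)) ≠ seq a n) := by
  -- choose separation / exit bounds
  set ν₁ : B.toBinTree.Branch × B.toBinTree.Branch → ℕ := fun bb =>
    if h : bb.1 = bb.2 then 0 else (B.toBinTree.exists_separation h).choose with hν₁
  set ν₂ : B.toBinTree.Branch → ℕ := fun β =>
    if h : ¬ ∃ ξ : X.toBinTree.Branch, ∀ n, β.1 n = g.toFun (ξ.1 n) then
      (g.exists_exit β h).choose
    else 0 with hν₂
  obtain ⟨N₁, hN₁⟩ := (Set.finite_range ν₁).bddAbove
  obtain ⟨N₂, hN₂⟩ := (Set.finite_range ν₂).bddAbove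
  set N := max N₁ N₂ with hN
  have sep : ∀ (β β' : B.toBinTree.Branch) (n : ℕ), N ≤ n → β.1 n = β'.1 n → β = β' := by
    intro β β' n hn heq
    by_contra hne
    have h1 : ν₁ (β, β') ≤ N₁ := hN₁ (Set.mem_range_self _)
    have h2 := (B.toBinTree.exists_separation hne).choose_spec n ?_
    · rw [hν₁] at h1
      exact h2 heq
    · rw [hν₁] at h1
      simp only [dif_neg hne] at h1
      omega
  have exit : ∀ (β : B.toBinTree.Branch),
      (¬ ∃ ξ : X.toBinTree.Branch, ∀ n, β.1 n = g.toFun (ξ.1 n)) →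
      ∀ n, N ≤ n → β.1 n ∉ Set.range g.toFun := by
    intro β hbad n hn
    have h1 : ν₂ β ≤ N₂ := hN₂ (Set.mem_range_self _)
    simp only [hν₂] at h1
    rw [dif_pos hbad] at h1
    exact (g.exists_exit β hbad).choose_spec n (by omega)
  -- the "smart" positions
  set Smart : B.carrier → Prop := fun c =>
    ∃ (a : κ) (β : B.toBinTree.Branch), β.1 (N + eA a + 1) = c with hSmart
  have smart_unique : ∀ {c : B.carrier} (h : Smart c) (a : κ)
      (β : B.toBinTree.Branch), β.1 (N + eA a + 1) = c → h.choose = a := by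
    intro c h a β hc
    obtain ⟨β₀, hβ₀⟩ := h.choose_spec
    have hd1 : B.toBinTree.depth c = N + eA h.choose + 2 := by
      have := B.toBinTree.depth_branchNode β₀ (N + eA h.choose + 1)
      rw [hβ₀] at this; exact this
    have hd2 : B.toBinTree.depth c = N + eA a + 2 := by
      have := B.toBinTree.depth_branchNode β (N + eA a + 1)
      rw [hc] at this; exact this
    exact heA (by omega)
  set dflt : B.carrier → Bool := fun c =>
    if h : Smart c then !(seq h.choose (N + eA h.choose))
    else if h' : Smart (B.toBinTree.sib c) then seq h'.choose (N + eA h'.choose)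
    else B.toBinTree.pairBit c with hdflt
  -- siblings cannot both be smart
  have smart_not_sib : ∀ {p c c' : B.carrier}, B.toBinTree.child p c →
      B.toBinTree.child p c' → c ≠ c' → Smart c → Smart c' → False := by
    intro p c c' hc hc' hne ⟨a, β, hβ⟩ ⟨a', β', hβ'⟩
    have hd : B.toBinTree.depth c = B.toBinTree.depth c' := by
      rw [B.toBinTree.depth_child hc, B.toBinTree.depth_child hc']
    rw [← hβ, ← hβ', B.toBinTree.depth_branchNode, B.toBinTree.depth_branchNode] at hd
    have hEA : eA a = eA a' := by omega
    have hpar : β.1 (N + eA a) = β'.1 (N + eA a) := by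
      have h1 : B.toBinTree.parent c = β.1 (N + eA a) :=
        B.toBinTree.parent_eq (hβ ▸ β.2.2 (N + eA a))
      have h2 : B.toBinTree.parent c' = β'.1 (N + eA a') :=
        B.toBinTree.parent_eq (hβ' ▸ β'.2.2 (N + eA a'))
      have h3 : B.toBinTree.parent c = p := B.toBinTree.parent_eq hc
      have h4 : B.toBinTree.parent c' = p := B.toBinTree.parent_eq hc'
      rw [← hEA]  at h2
      rw [← h1, ← h2, h3, h4]
    have := sep β β' (N + eA a) (by omega) hpar
    subst this
    apply hne
    rw [← hβ, ← hβ', hEA]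
  -- the default is sibling-distinguishing
  have hd : ∀ p c c', B.toBinTree.child p c → B.toBinTree.child p c' → c ≠ c' →
      dflt c ≠ dflt c' := by
    intro p c c' hc hc' hne
    have hsib : c' = B.toBinTree.sib c := B.toBinTree.eq_sib_of hc hc' (Ne.symm hne)
    have hsib' : c = B.toBinTree.sib c' := B.toBinTree.eq_sib_of hc' hc hne
    rw [hdflt]
    by_cases h1 : Smart c
    · have h2 : ¬ Smart c' := fun h2 => smart_not_sib hc hc' hne h1 h2
      have h3 : Smart (B.toBinTree.sib c') := hsib' ▸ h1
      simp only [dif_pos h1, dif_neg h2, dif_pos h3]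
      have : h3.choose = h1.choose := by
        obtain ⟨β, hβ⟩ := h1.choose_spec
        exact smart_unique h3 h1.choose β (by rw [hβ, hsib'])
      rw [this]
      simp
    · by_cases h2 : Smart c'
      · have h3 : Smart (B.toBinTree.sib c) := hsib ▸ h2
        simp only [dif_neg h1, dif_pos h2, dif_pos h3]
        have : h3.choose = h2.choose := by
          obtain ⟨β, hβ⟩ := h2.choose_spec
          exact smart_unique h3 h2.choose β (by rw [hβ, hsib])
        rw [this]
        simp
      · have h3 : ¬ Smart (B.toBinTree.sib c) := hsib ▸ h2
        have h4 : ¬ Smart (B.toBinTree.sib c') := hsib' ▸ h1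
        simp only [dif_neg h1, dif_neg h2, dif_neg h3, dif_neg h4]
        exact B.toBinTree.pairBit_distinct hc hc' hne
  refine ⟨extOrient g oX dflt, isOrientation_extOrient g hoX hd,
    strOf_extOrient g dflt, ?_⟩
  intro β a hbad
  refine ⟨N + eA a, ?_⟩
  set n := N + eA a with hn
  set c := β.1 (n + 1) with hc
  have hnr : ¬ ∃ x, g.toFun x = c := by
    intro ⟨x, hx⟩
    exact exit β hbad (n + 1) (by omega) ⟨x, hx⟩
  have hns : ¬ ∃ x, g.toFun x = B.toBinTree.sib c := by
    intro ⟨x, hx⟩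
    have hcs : B.toBinTree.child (β.1 n) (B.toBinTree.sib c) :=
      (B.toBinTree.sib_spec (β.2.2 n)).1
    have : β.1 n ∈ Set.range g.toFun := g.range_child_closed (hx ▸ hcs)
    exact exit β hbad n (by omega) this
  rw [extOrient_eq_dflt g oX dflt hnr hns, hdflt]
  have hsm : Smart c := ⟨a, β, rfl⟩
  simp only [dif_pos hsm]
  have : hsm.choose = a := smart_unique hsm a β rfl
  rw [this]
  simp [hn]

end ITree

end Diagonal
section StringTree

open scoped Classical

namespace BinTree

variable (S : Set (List Bool))

/-- The canonical path to a node of a string tree. -/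
def cpath (hdown : ∀ (b : Bool) (s : List Bool), b :: s ∈ S → s ∈ S) :
    (l : List Bool) → l ∈ S → List {s : List Bool // s ∈ S}
  | [], h => [⟨[], h⟩]
  | (b :: t), h => cpath hdown t (hdown b t h) ++ [⟨b :: t, h⟩]

variable {S} (hroot : [] ∈ S)
  (hdown : ∀ (b : Bool) (s : List Bool), b :: s ∈ S → s ∈ S)
  (hfull : ∀ (b b' : Bool) (s : List Bool), b :: s ∈ S → b' :: s ∈ S)

lemma cpath_ne_nil : ∀ (l : List Bool) (h : l ∈ S), cpath S hdown l h ≠ [] := by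
  intro l h
  cases l with
  | nil => simp [cpath]
  | cons b t => simp [cpath]

lemma cpath_getLast (l : List Bool) (h : l ∈ S) :
    (cpath S hdown l h).getLast? = some ⟨l, h⟩ := by
  cases l with
  | nil => simp [cpath]
  | cons b t => simp [cpath]

lemma cpath_head (l : List Bool) (h : l ∈ S) :
    (cpath S hdown l h).head? = some ⟨[], hroot⟩ := by
  induction l with
  | nil => simp [cpath]
  | cons b t ih =>
    rw [cpath]
    rw [List.head?_append_of_ne_nil _ (cpath_ne_nil hdown t (hdown b t h))]
    exact ih (hdown b t h)

lemma cpath_chain (l : List Bool) (h : l ∈ S) :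
    (cpath S hdown l h).Chain' (fun x y => ∃ bit : Bool, y.1 = bit :: x.1) := by
  induction l with
  | nil => simp [cpath, List.Chain']
  | cons b t ih =>
    rw [cpath, List.Chain', List.isChain_append]
    refine ⟨ih (hdown b t h), List.isChain_singleton _, ?_⟩
    intro x hx y hy
    rw [cpath_getLast] at hx
    simp at hx hy
    subst hx; subst hy
    exact ⟨b, rfl⟩

/-- The full binary tree on a suitable set of binary strings. -/
noncomputable def stringTree : BinTree where
  carrier := {s : List Bool // s ∈ S}
  root := ⟨[], hroot⟩
  child x y := ∃ bit : Bool, y.1 = bit :: x.1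
  children_empty_or_pair := by
    intro x
    by_cases h : ∃ bit : Bool, (bit :: x.1) ∈ S
    · obtain ⟨bit, hbit⟩ := h
      refine Or.inr ⟨⟨true :: x.1, hfull bit true x.1 hbit⟩,
        ⟨false :: x.1, hfull bit false x.1 hbit⟩, ?_, ?_⟩
      · intro hc
        have := congrArg Subtype.val hc
        simp at this
      · ext y
        simp only [Set.mem_setOf_eq, Set.mem_insert_iff, Set.mem_singleton_iff]
        constructor
        · intro ⟨b, hb⟩
          cases b
          · right; exact Subtype.ext hb
          · left; exact Subtype.ext hb
        · intro hy
          rcases hy with hy | hy <;> subst hy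
          · exact ⟨true, rfl⟩
          · exact ⟨false, rfl⟩
    · left
      ext y
      simp only [Set.mem_setOf_eq, Set.mem_empty_iff_false, iff_false]
      intro ⟨b, hb⟩
      exact h ⟨b, hb ▸ y.2⟩
  unique_path := by
    intro y
    refine ⟨cpath S hdown y.1 y.2, ⟨cpath_chain hdown y.1 y.2,
      cpath_head hroot hdown y.1 y.2, by rw [cpath_getLast]⟩, ?_⟩
    -- uniqueness
    have main : ∀ (l : List {s : List Bool // s ∈ S}),
        l.Chain' (fun x y => ∃ bit : Bool, y.1 = bit :: x.1) →
        l.head? = some ⟨[], hroot⟩ →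
        ∀ (y : {s : List Bool // s ∈ S}), l.getLast? = some y →
        l = cpath S hdown y.1 y.2 := by
      intro l
      induction l using List.reverseRecOn with
      | nil => intro _ h2 _ _; simp at h2
      | append_singleton l' c ih =>
        intro h1 h2 y h3
        have hcy : c = y := by
          rw [List.getLast?_concat] at h3
          exact Option.some_injective _ h3
        subst hcy
        by_cases hl' : l' = []
        · subst hl'
          simp at h2
          subst h2
          simp [cpath]
        · obtain ⟨p, hp⟩ : ∃ p, l'.getLast? = some p := by
            cases hq : l'.getLast? with
            | none => exact absurd (List.getLast?_eq_none_iff.1 hq) hl'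
            | some p => exact ⟨p, rfl⟩
          rw [List.Chain', List.isChain_append] at h1
          have hlink : ∃ bit : Bool, c.1 = bit :: p.1 := by
            have := h1.2.2 p (by rw [hp]; rfl) c rfl
            exact this
          obtain ⟨bit, hbit⟩ := hlink
          have hhead : l'.head? = some ⟨[], hroot⟩ := by
            rw [List.head?_append_of_ne_nil _ hl'] at h2
            exact h2
          have ihl := ih h1.1 hhead p hp
          obtain ⟨cval, cmem⟩ := c
          have hc1 : cval = bit :: p.1 := hbit
          subst hc1
          rw [ihl]
          rfl
    intro l hl
    exact main l hl.1 hl.2.1 y hl.2.2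
end BinTree

end StringTree
section Amalgam

open scoped Classical

namespace BinTree

/-- Reconstruct a branch from a sequence of strings in the range of `strOf`. -/
lemma branch_of_str {T : BinTree} {o : T.carrier → Bool} (ho : T.IsOrientation o)
    (u : ℕ → List Bool) (h0 : u 0 = []) (hstep : ∀ n, ∃ b : Bool, u (n+1) = b :: u n)
    (hmem : ∀ n, u n ∈ Set.range (T.strOf o)) :
    ∃ α : T.Branch, ∀ n, u n = T.strOf o (α.1 n) := by
  have hspec : ∀ n, T.strOf o ((hmem n).choose) = u n := fun n => (hmem n).choose_spec
  have hbr : T.IsBranch (fun n => (hmem n).choose) := by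
    constructor
    · apply T.strOf_inj ho
      rw [hspec 0, h0, T.strOf_root]
    · intro n
      obtain ⟨b, hb⟩ := hstep n
      refine T.child_of_strOf ho (b := b) ?_
      rw [hspec n, hspec (n+1), hb]
  exact ⟨⟨_, hbr⟩, fun n => (hspec n).symm⟩

/-- Every branch of a string tree on a union lives in one of the two halves. -/
lemma stringTree_branch_dichotomy {S₁ S₂ : Set (List Bool)}
    (hroot : [] ∈ S₁ ∪ S₂)
    (hdown : ∀ (b : Bool) (s : List Bool), b :: s ∈ S₁ ∪ S₂ → s ∈ S₁ ∪ S₂)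
    (hfull : ∀ (b b' : Bool) (s : List Bool), b :: s ∈ S₁ ∪ S₂ → b' :: s ∈ S₁ ∪ S₂)
    (hd1 : ∀ (b : Bool) (s : List Bool), b :: s ∈ S₁ → s ∈ S₁)
    (hd2 : ∀ (b : Bool) (s : List Bool), b :: s ∈ S₂ → s ∈ S₂)
    (γ : (stringTree hroot hdown hfull).Branch) :
    (∀ n, (γ.1 n).1 ∈ S₁) ∨ (∀ n, (γ.1 n).1 ∈ S₂) := by
  have hstep : ∀ n, ∃ b : Bool, (γ.1 (n+1)).1 = b :: (γ.1 n).1 := fun n => γ.2.2 n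
  have down_all : ∀ (P : ℕ → Prop), (∀ n, P (n+1) → P n) →
      ∀ m, P m → ∀ k, k ≤ m → P k := by
    intro P hP m
    induction m with
    | zero =>
      intro hm k hk
      have : k = 0 := by omega
      rw [this]; exact hm
    | succ m ih =>
      intro hm k hk
      rcases Nat.lt_or_ge k (m+1) with h | h
      · exact ih (hP m hm) k (by omega)
      · have : k = m + 1 := by omega
        rw [this]; exact hm
  have hP1 : ∀ n, (γ.1 (n+1)).1 ∈ S₁ → (γ.1 n).1 ∈ S₁ := by
    intro n hn
    obtain ⟨b, hb⟩ := hstep n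
    rw [hb] at hn
    exact hd1 b _ hn
  have hP2 : ∀ n, (γ.1 (n+1)).1 ∈ S₂ → (γ.1 n).1 ∈ S₂ := by
    intro n hn
    obtain ⟨b, hb⟩ := hstep n
    rw [hb] at hn
    exact hd2 b _ hn
  by_cases h : ∀ n, (γ.1 n).1 ∈ S₁
  · exact Or.inl h
  · push_neg at h
    obtain ⟨n₀, hn₀⟩ := h
    right
    have hup : ∀ n, n₀ ≤ n → (γ.1 n).1 ∈ S₂ := by
      intro n hn
      have hnot1 : (γ.1 n).1 ∉ S₁ := by
        intro hmem
        exact hn₀ (down_all (fun m => (γ.1 m).1 ∈ S₁) hP1 n hmem n₀ hn)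
      rcases (γ.1 n).2 with h | h
      · exact absurd h hnot1
      · exact h
    intro n
    rcases Nat.le_total n₀ n with h | h
    · exact hup n h
    · exact down_all (fun m => (γ.1 m).1 ∈ S₂) hP2 n₀ (hup n₀ le_rfl) n h

end BinTree

namespace ITree

variable {I : Type} {A B : ITree I}
variable (oA : A.carrier → Bool) (oB : B.carrier → Bool)

lemma amalg_root : [] ∈ Set.range (A.toBinTree.strOf oA) ∪ Set.range (B.toBinTree.strOf oB) :=
  Or.inl ⟨A.root, A.toBinTree.strOf_root oA⟩

lemma amalg_down : ∀ (b : Bool) (s : List Bool),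
    b :: s ∈ Set.range (A.toBinTree.strOf oA) ∪ Set.range (B.toBinTree.strOf oB) →
    s ∈ Set.range (A.toBinTree.strOf oA) ∪ Set.range (B.toBinTree.strOf oB) := by
  rintro b s (⟨c, hc⟩ | ⟨c, hc⟩)
  · obtain ⟨p, _, hp⟩ := A.toBinTree.strOf_down hc
    exact Or.inl ⟨p, hp⟩
  · obtain ⟨p, _, hp⟩ := B.toBinTree.strOf_down hc
    exact Or.inr ⟨p, hp⟩

lemma amalg_full (hoA : A.toBinTree.IsOrientation oA) (hoB : B.toBinTree.IsOrientation oB) :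
    ∀ (b b' : Bool) (s : List Bool),
    b :: s ∈ Set.range (A.toBinTree.strOf oA) ∪ Set.range (B.toBinTree.strOf oB) →
    b' :: s ∈ Set.range (A.toBinTree.strOf oA) ∪ Set.range (B.toBinTree.strOf oB) := by
  rintro b b' s (⟨c, hc⟩ | ⟨c, hc⟩)
  · by_cases hbb : b' = b
    · exact Or.inl ⟨c, by rw [hc, hbb]⟩
    · obtain ⟨c', hc'⟩ := A.toBinTree.strOf_full hoA hc
      have hb' : b' = !b := by cases b <;> cases b' <;> simp_all
      exact Or.inl ⟨c', by rw [hc', hb']⟩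
  · by_cases hbb : b' = b
    · exact Or.inr ⟨c, by rw [hc, hbb]⟩
    · obtain ⟨c', hc'⟩ := B.toBinTree.strOf_full hoB hc
      have hb' : b' = !b := by cases b <;> cases b' <;> simp_all
      exact Or.inr ⟨c', by rw [hc', hb']⟩

variable (hoA : A.toBinTree.IsOrientation oA) (hoB : B.toBinTree.IsOrientation oB)

/-- The underlying binary tree of the amalgam. -/
noncomputable def amalgBin : BinTree :=
  BinTree.stringTree (amalg_root oA oB) (amalg_down oA oB) (amalg_full oA oB hoA hoB)

/-- The label function of the amalgam. -/
noncomputable def amalgLabel : (amalgBin oA oB hoA hoB).Branch → Option I := fun γ =>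
  if h : ∃ α : A.toBinTree.Branch, ∀ n, (γ.1 n).1 = A.toBinTree.strOf oA (α.1 n) then
    A.label h.choose
  else if h' : ∃ β : B.toBinTree.Branch, ∀ n, (γ.1 n).1 = B.toBinTree.strOf oB (β.1 n) then
    B.label h'.choose
  else none

/-- The amalgam. -/
noncomputable def amalg : ITree I :=
  ⟨amalgBin oA oB hoA hoB, amalgLabel oA oB hoA hoB⟩

lemma amalg_dichotomy (γ : (amalg oA oB hoA hoB).toBinTree.Branch) :
    (∃ α : A.toBinTree.Branch, ∀ n, (γ.1 n).1 = A.toBinTree.strOf oA (α.1 n)) ∨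
    (∃ β : B.toBinTree.Branch, ∀ n, (γ.1 n).1 = B.toBinTree.strOf oB (β.1 n)) := by
  have h0 : (γ.1 0).1 = [] := congrArg Subtype.val γ.2.1
  have hstep : ∀ n, ∃ b : Bool, (γ.1 (n+1)).1 = b :: (γ.1 n).1 := fun n => γ.2.2 n
  rcases BinTree.stringTree_branch_dichotomy (amalg_root oA oB) (amalg_down oA oB)
      (amalg_full oA oB hoA hoB)
      (fun b s hb => by
        obtain ⟨p, _, hp⟩ := A.toBinTree.strOf_down (c := hb.choose) hb.choose_spec
        exact ⟨p, hp⟩)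
      (fun b s hb => by
        obtain ⟨p, _, hp⟩ := B.toBinTree.strOf_down (c := hb.choose) hb.choose_spec
        exact ⟨p, hp⟩) γ with h | h
  · exact Or.inl (BinTree.branch_of_str hoA _ h0 hstep h)
  · exact Or.inr (BinTree.branch_of_str hoB _ h0 hstep h)

/-- The embedding of `A` into the amalgam. -/
noncomputable def embA : A.Emb (amalg oA oB hoA hoB) where
  toFun a := ⟨A.toBinTree.strOf oA a, Or.inl ⟨a, rfl⟩⟩
  inj a a' h := A.toBinTree.strOf_inj hoA (congrArg Subtype.val h)
  map_root := Subtype.ext (A.toBinTree.strOf_root oA)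
  map_child a b := by
    constructor
    · intro h
      exact ⟨oA b, by simp [A.toBinTree.strOf_child oA h]⟩
    · intro ⟨bit, hb⟩
      exact A.toBinTree.child_of_strOf hoA (b := bit) hb
  map_label := by
    intro b c hbc i hi
    have hcond : ∃ α : A.toBinTree.Branch, ∀ n, (c.1 n).1 = A.toBinTree.strOf oA (α.1 n) :=
      ⟨b, fun n => congrArg Subtype.val (hbc n)⟩
    show amalgLabel oA oB hoA hoB c = some i
    simp only [amalgLabel]; rw [dif_pos hcond]
    have : hcond.choose = b := by
      refine Subtype.ext (funext fun n => A.toBinTree.strOf_inj hoA ?_)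
      rw [← hcond.choose_spec n]
      exact congrArg Subtype.val (hbc n)
    rw [this]
    exact hi

/-- The embedding of `B` into the amalgam. -/
noncomputable def embB {X : ITree I} (f : X.Emb A) (g : X.Emb B)
    (oX : X.carrier → Bool)
    (hAf : ∀ x, A.toBinTree.strOf oA (f.toFun x) = X.toBinTree.strOf oX x)
    (hBg : ∀ x, B.toBinTree.strOf oB (g.toFun x) = X.toBinTree.strOf oX x)
    (havoid : ∀ (β : B.toBinTree.Branch) (α : A.toBinTree.Branch),
      (¬ ∃ ξ : X.toBinTree.Branch, ∀ n, β.1 n = g.toFun (ξ.1 n)) →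
      ∃ n, oB (β.1 (n+1)) ≠ oA (α.1 (n+1)))
    (hXtot : ∀ b, (X.label b).isSome) :
    B.Emb (amalg oA oB hoA hoB) where
  toFun b := ⟨B.toBinTree.strOf oB b, Or.inr ⟨b, rfl⟩⟩
  inj b b' h := B.toBinTree.strOf_inj hoB (congrArg Subtype.val h)
  map_root := Subtype.ext (B.toBinTree.strOf_root oB)
  map_child a b := by
    constructor
    · intro h
      exact ⟨oB b, by simp [B.toBinTree.strOf_child oB h]⟩
    · intro ⟨bit, hb⟩
      exact B.toBinTree.child_of_strOf hoB (b := bit) hb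
  map_label := by
    intro β γ hbc i hi
    have hstr : ∀ n, (γ.1 n).1 = B.toBinTree.strOf oB (β.1 n) :=
      fun n => congrArg Subtype.val (hbc n)
    show amalgLabel oA oB hoA hoB γ = some i
    by_cases h : ∃ α : A.toBinTree.Branch, ∀ n, (γ.1 n).1 = A.toBinTree.strOf oA (α.1 n)
    · simp only [amalgLabel]; rw [dif_pos h]
      have hα := h.choose_spec
      set α := h.choose with hαdef
      have heq : ∀ n, A.toBinTree.strOf oA (α.1 n) = B.toBinTree.strOf oB (β.1 n) :=
        fun n => (hα n).symm.trans (hstr n)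
      have hbits : ∀ n, oB (β.1 (n+1)) = oA (α.1 (n+1)) := by
        intro n
        have h1 := A.toBinTree.strOf_child oA (α.2.2 n)
        have h2 := B.toBinTree.strOf_child oB (β.2.2 n)
        have h3 := heq (n+1)
        rw [h1, h2] at h3
        exact ((List.cons.injEq _ _ _ _ ▸ h3).1).symm
      have hgood : ∃ ξ : X.toBinTree.Branch, ∀ n, β.1 n = g.toFun (ξ.1 n) := by
        by_contra hbad
        obtain ⟨n, hn⟩ := havoid β α hbad
        exact hn (hbits n)
      obtain ⟨ξ, hξ⟩ := hgood
      obtain ⟨i₀, hi₀⟩ := Option.isSome_iff_exists.1 (hXtot ξ)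
      have hBl : B.label β = some i₀ := g.map_label ξ β (fun n => hξ n) i₀ hi₀
      have hii : i₀ = i := by
        rw [hBl] at hi
        exact Option.some_injective _ hi
      subst hii
      have hαξ : ∀ n, α.1 n = f.toFun (ξ.1 n) := by
        intro n
        apply A.toBinTree.strOf_inj hoA
        rw [hAf (ξ.1 n), heq n, hξ n, hBg (ξ.1 n)]
      exact f.map_label ξ α hαξ i₀ hi₀
    · simp only [amalgLabel]; rw [dif_neg h, dif_pos (⟨β, hstr⟩ :
        ∃ β' : B.toBinTree.Branch, ∀ n, (γ.1 n).1 = B.toBinTree.strOf oB (β'.1 n))]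
      set hbig : ∃ β' : B.toBinTree.Branch, ∀ n, (γ.1 n).1 = B.toBinTree.strOf oB (β'.1 n) :=
        ⟨β, hstr⟩ with hbigdef
      have : hbig.choose = β := by
        refine Subtype.ext (funext fun n => B.toBinTree.strOf_inj hoB ?_)
        rw [← hbig.choose_spec n, hstr n]
      rw [this]
      exact hi

end ITree

end Amalgam
section Final

open scoped Classical

namespace ITree

variable {I : Type} {A B : ITree I}
variable (oA : A.carrier → Bool) (oB : B.carrier → Bool)
variable (hoA : A.toBinTree.IsOrientation oA) (hoB : B.toBinTree.IsOrientation oB)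

/-- The image of a branch of `A` in the amalgam. -/
noncomputable def brA (α : A.toBinTree.Branch) : (amalg oA oB hoA hoB).toBinTree.Branch :=
  ⟨fun n => ⟨A.toBinTree.strOf oA (α.1 n), Or.inl ⟨_, rfl⟩⟩, by
    constructor
    · exact Subtype.ext (show A.toBinTree.strOf oA (α.1 0) = [] by
        rw [α.2.1, A.toBinTree.strOf_root])
    · intro n
      exact ⟨oA (α.1 (n+1)), by simp [A.toBinTree.strOf_child oA (α.2.2 n)]⟩⟩

/-- The image of a branch of `B` in the amalgam. -/
noncomputable def brB (β : B.toBinTree.Branch) : (amalg oA oB hoA hoB).toBinTree.Branch :=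
  ⟨fun n => ⟨B.toBinTree.strOf oB (β.1 n), Or.inr ⟨_, rfl⟩⟩, by
    constructor
    · exact Subtype.ext (show B.toBinTree.strOf oB (β.1 0) = [] by
        rw [β.2.1, B.toBinTree.strOf_root])
    · intro n
      exact ⟨oB (β.1 (n+1)), by simp [B.toBinTree.strOf_child oB (β.2.2 n)]⟩⟩

lemma amalg_finitary (hA : A.Finitary) (hB : B.Finitary) :
    (amalg oA oB hoA hoB).Finitary := by
  obtain ⟨hA1, hA2, hA3⟩ := hA
  obtain ⟨hB1, hB2, hB3⟩ := hB
  refine ⟨?_, ?_, ?_⟩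
  · haveI := hA1; haveI := hB1
    apply Finite.of_surjective (Sum.elim (brA oA oB hoA hoB) (brB oA oB hoA hoB))
    intro γ
    rcases amalg_dichotomy oA oB hoA hoB γ with ⟨α, hα⟩ | ⟨β, hβ⟩
    · exact ⟨Sum.inl α, Subtype.ext (funext fun n => Subtype.ext (hα n).symm)⟩
    · exact ⟨Sum.inr β, Subtype.ext (funext fun n => Subtype.ext (hβ n).symm)⟩
  · have hEA : {x : A.carrier | ¬ ∃ p, A.child p x ∧ A.toBinTree.OnBranch p}.Finite :=
      Set.finite_coe_iff.1 hA2
    have hEB : {x : B.carrier | ¬ ∃ p, B.child p x ∧ B.toBinTree.OnBranch p}.Finite :=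
      Set.finite_coe_iff.1 hB2
    apply Set.finite_coe_iff.2
    refine Set.Finite.subset
      ((hEA.image (fun a => (⟨A.toBinTree.strOf oA a, Or.inl ⟨a, rfl⟩⟩ :
          (amalg oA oB hoA hoB).carrier))).union
        (hEB.image (fun b => (⟨B.toBinTree.strOf oB b, Or.inr ⟨b, rfl⟩⟩ :
          (amalg oA oB hoA hoB).carrier)))) ?_
    intro x hx
    rcases x.2 with ⟨a, ha⟩ | ⟨b, hb⟩
    · refine Or.inl ⟨a, ?_, Subtype.ext ha⟩
      intro ⟨p, hpc, hob⟩
      obtain ⟨α, m, hm⟩ := hob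
      refine hx ⟨⟨A.toBinTree.strOf oA p, Or.inl ⟨p, rfl⟩⟩, ⟨oA a, ?_⟩,
        ⟨brA oA oB hoA hoB α, m, ?_⟩⟩
      · show x.1 = oA a :: A.toBinTree.strOf oA p
        rw [← ha, A.toBinTree.strOf_child oA hpc]
      · exact Subtype.ext (congrArg (A.toBinTree.strOf oA) hm)
    · refine Or.inr ⟨b, ?_, Subtype.ext hb⟩
      intro ⟨p, hpc, hob⟩
      obtain ⟨β, m, hm⟩ := hob
      refine hx ⟨⟨B.toBinTree.strOf oB p, Or.inr ⟨p, rfl⟩⟩, ⟨oB b, ?_⟩,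
        ⟨brB oA oB hoA hoB β, m, ?_⟩⟩
      · show x.1 = oB b :: B.toBinTree.strOf oB p
        rw [← hb, B.toBinTree.strOf_child oB hpc]
      · exact Subtype.ext (congrArg (B.toBinTree.strOf oB) hm)
  · intro γ
    show (amalgLabel oA oB hoA hoB γ).isSome
    by_cases h : ∃ α : A.toBinTree.Branch, ∀ n, (γ.1 n).1 = A.toBinTree.strOf oA (α.1 n)
    · simp only [amalgLabel]; rw [dif_pos h]
      exact hA3 _
    · rcases amalg_dichotomy oA oB hoA hoB γ with h' | h'
      · exact absurd h' h
      · simp only [amalgLabel]; rw [dif_neg h, dif_pos h']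
        exact hB3 _

end ITree

end Final

/-- STATEMENT 15: the category `T_I` of finitary `I`-trees and embeddings has
amalgamation. -/
theorem stmt15 (I : Type) {X A B : FinITree I} (f : X ⟶ A) (g : X ⟶ B) :
    ∃ (C : FinITree I) (h : A ⟶ C) (k : B ⟶ C), f ≫ h = g ≫ k := by
  classical
  obtain ⟨Xt, hXfin⟩ := X
  obtain ⟨At, hAfin⟩ := A
  obtain ⟨Bt, hBfin⟩ := B
  set oX : Xt.carrier → Bool := Xt.toBinTree.pairBit with hoXdef
  have hoX : Xt.toBinTree.IsOrientation oX := Xt.toBinTree.isOrientation_pairBit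
  set oA : At.carrier → Bool := ITree.extOrient f.hom oX At.toBinTree.pairBit with hoAdef
  have hoA : At.toBinTree.IsOrientation oA :=
    ITree.isOrientation_extOrient f.hom hoX
      (fun p c c' hc hc' hne => At.toBinTree.pairBit_distinct hc hc' hne)
  have hAf : ∀ x, At.toBinTree.strOf oA (f.hom.toFun x) = Xt.toBinTree.strOf oX x :=
    ITree.strOf_extOrient f.hom At.toBinTree.pairBit
  haveI := hAfin.1
  obtain ⟨eA, heA⟩ := exists_injective_nat At.toBinTree.Branch
  obtain ⟨oB, hoB, hBg, havoid⟩ := ITree.exists_good_orient g.hom hoX hBfin.1 eA heA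
    (fun α n => oA (α.1 (n+1)))
  refine ⟨⟨ITree.amalg oA oB hoA hoB, ITree.amalg_finitary oA oB hoA hoB hAfin hBfin⟩,
    InducedCategory.homMk (ITree.embA oA oB hoA hoB),
    InducedCategory.homMk (ITree.embB oA oB hoA hoB f.hom g.hom oX hAf hBg havoid hXfin.2.2), ?_⟩
  apply InducedCategory.hom_ext
  apply ITree.Emb.ext'
  funext x
  exact Subtype.ext ((hAf x).trans (hBg x).symm)
end
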